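/- arXiv:1107.4819 — 15 statements merged into one kernel-verified Lean document; each statement's English description precedes it below -/
import Mathlib

section
/- Let S be a semigroup generated by two elements x and y with xyx = x and yxy = y. If additionally xy = x²y², then for every positive integer n we have xⁿyⁿxⁿ = xⁿ and yⁿxⁿyⁿ = yⁿ. -/
namespace PaperStmt

/-- `S` is a regular semigroup. -/
def RegularSgp (S : Type*) [Semigroup S] : Prop := ∀ x : S, ∃ y, x * y * x = x

/-- The idempotents of `S` form a subsemigroup. -/
def IdemClosed (S : Type*) [Semigroup S] : Prop :=
  ∀ e f : S, e * e = e → f * f = f → (e * f) * (e * f) = e * f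

/-- An orthodox semigroup: regular with idempotents closed under multiplication. -/
def Orthodox (S : Type*) [Semigroup S] : Prop := RegularSgp S ∧ IdemClosed S

/-- Green's R-relation in a monoid. -/
def GreenRM {M : Type*} [Monoid M] (x y : M) : Prop :=
  (∃ s, x = y * s) ∧ (∃ s, y = x * s)

/-- Green's L-relation in a monoid. -/
def GreenLM {M : Type*} [Monoid M] (x y : M) : Prop :=
  (∃ s, x = s * y) ∧ (∃ s, y = s * x)

/-- Green's R-relation on a semigroup, computed in S¹ = WithOne S. -/
def GreenR {S : Type*} [Semigroup S] (x y : S) : Prop :=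
  GreenRM (x : WithOne S) (y : WithOne S)

/-- Green's L-relation on a semigroup. -/
def GreenL {S : Type*} [Semigroup S] (x y : S) : Prop :=
  GreenLM (x : WithOne S) (y : WithOne S)

/-- Green's H-relation. -/
def GreenH {S : Type*} [Semigroup S] (x y : S) : Prop := GreenR x y ∧ GreenL x y

/-- Green's D-relation, D = L ∘ R. -/
def GreenD {S : Type*} [Semigroup S] (x y : S) : Prop :=
  ∃ z : S, GreenL x z ∧ GreenR z y

/-- `a` belongs to some subgroup of `S`. -/
def InSubgroup {S : Type*} [Semigroup S] (a : S) : Prop :=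
  ∃ G : Set S, a ∈ G ∧ (∀ x ∈ G, ∀ y ∈ G, x * y ∈ G) ∧
    ∃ e ∈ G, (∀ x ∈ G, e * x = x ∧ x * e = x) ∧ ∀ x ∈ G, ∃ y ∈ G, x * y = e ∧ y * x = e

/-- The H-class of `a` is a group with identity element `e`. -/
def HClassGroupWithId {S : Type*} [Semigroup S] (a e : S) : Prop :=
  GreenH e a ∧ e * e = e ∧ (∀ x, GreenH x a → e * x = x ∧ x * e = x) ∧
    ∀ x, GreenH x a → ∃ y, GreenH y a ∧ x * y = e ∧ y * x = e

theorem stmt0 {S : Type*} [Semigroup S] (x y : S)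
    (hgen : Subsemigroup.closure ({x, y} : Set S) = ⊤)
    (h1 : x * y * x = x) (h2 : y * x * y = y)
    (h3 : x * y = x * x * (y * y)) :
    ∀ n : ℕ, 1 ≤ n →
      (x : WithOne S) ^ n * (y : WithOne S) ^ n * (x : WithOne S) ^ n = (x : WithOne S) ^ n ∧
      (y : WithOne S) ^ n * (x : WithOne S) ^ n * (y : WithOne S) ^ n = (y : WithOne S) ^ n := by
  set a : WithOne S := (x : WithOne S) with ha
  set b : WithOne S := (y : WithOne S) with hb
  have H1 : a * b * a = a := by rw [ha, hb, ← WithOne.coe_mul, ← WithOne.coe_mul, h1]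
  have H2 : b * a * b = b := by rw [ha, hb, ← WithOne.coe_mul, ← WithOne.coe_mul, h2]
  have H3 : a * b = a * a * (b * b) := by
    rw [ha, hb]
    repeat rw [← WithOne.coe_mul]
    rw [h3]
  have key : ∀ n : ℕ, 1 ≤ n → a ^ n * b ^ n = a * b := by
    intro n hn
    induction n with
    | zero => omega
    | succ m ih =>
      rcases Nat.eq_or_lt_of_le hn with h | h
      · simp [← h]
      · have hm : 1 ≤ m := by omega
        have := ih hm
        calc a ^ (m + 1) * b ^ (m + 1) = a * (a ^ m * b ^ m) * b := by
              rw [pow_succ' a, pow_succ b]; simp only [mul_assoc]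
          _ = a * (a * b) * b := by rw [this]
          _ = a * a * (b * b) := by simp only [mul_assoc]
          _ = a * b := H3.symm
  intro n hn
  obtain ⟨m, rfl⟩ : ∃ m, n = m + 1 := ⟨n - 1, by omega⟩
  constructor
  · calc a ^ (m+1) * b ^ (m+1) * a ^ (m+1) = (a * b) * (a * a ^ m) := by
          rw [key _ hn, pow_succ']
      _ = (a * b * a) * a ^ m := by simp only [mul_assoc]
      _ = a ^ (m+1) := by rw [H1, pow_succ']
  · calc b ^ (m+1) * a ^ (m+1) * b ^ (m+1)
        = b ^ m * (b * (a ^ (m+1) * b ^ (m+1))) := by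
          simp only [pow_succ, mul_assoc]
      _ = b ^ m * (b * (a * b)) := by rw [key _ hn]
      _ = b ^ m * (b * a * b) := by simp only [mul_assoc]
      _ = b ^ (m+1) := by rw [H2, pow_succ]

end PaperStmt
end

section
/- Let S be a semigroup and x, y ∈ S with xy = x²y². Then xy = xⁿyⁿ for all positive integers n. -/
namespace PaperStmt

theorem stmt1 {S : Type*} [Semigroup S] (x y : S)
    (h : x * y = x * x * (y * y)) :
    ∀ n : ℕ, 1 ≤ n →
      (x : WithOne S) * (y : WithOne S) = (x : WithOne S) ^ n * (y : WithOne S) ^ n := by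
  have h' : (x : WithOne S) * y = x * x * (y * y) := by
    rw [← WithOne.coe_mul, ← WithOne.coe_mul, ← WithOne.coe_mul, ← WithOne.coe_mul, h]
  intro n hn
  induction n with
  | zero => omega
  | succ m ih =>
    rcases Nat.eq_or_lt_of_le hn with h1 | h1
    · simp [← h1]
    · have hm : 1 ≤ m := by omega
      have := ih hm
      calc (x : WithOne S) * y = x * x * (y * y) := h'
        _ = x * (x * y) * y := by simp [mul_assoc]
        _ = x * ((x:WithOne S)^m * y^m) * y := by rw [← this]
        _ = (x:WithOne S)^(m+1) * y^(m+1) := by rw [pow_succ' (x:WithOne S) m, pow_succ]; simp [mul_assoc]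

end PaperStmt
end

section
/- Let S be a regular semigroup in which idempotents form a subsemigroup (orthodox), let a ∈ S and b be an inverse of a (aba = a, bab = b). Then the following are equivalent: (a) a = a²x for some x ∈ S; (b) a = a²(b²a); (c) ab = a²b²; (d) b = (ba²)b²; (e) b = yb² for some y ∈ S. -/
namespace PaperStmt

theorem stmt2 {S : Type*} [Semigroup S] (hO : Orthodox S) (a b : S)
    (h1 : a * b * a = a) (h2 : b * a * b = b) :
    [(∃ x : S, a = a * a * x),
     a = a * a * (b * b * a),
     a * b = a * a * (b * b),
     b = b * (a * a) * (b * b),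
     (∃ y : S, b = y * (b * b))].TFAE := by
  have h1' : a * (b * a) = a := by rw [← mul_assoc, h1]
  have h2' : b * (a * b) = b := by rw [← mul_assoc, h2]
  have he : (a * b) * (a * b) = a * b := by rw [← mul_assoc, h1]
  have hf : (b * a) * (b * a) = b * a := by rw [← mul_assoc, h2]
  have hef : ((a*b)*(b*a))*((a*b)*(b*a)) = (a*b)*(b*a) := hO.2 _ _ he hf
  have hfe : ((b*a)*(a*b))*((b*a)*(a*b)) = (b*a)*(a*b) := hO.2 _ _ hf he
  -- key1 : a² b² a² = a²
  have key1 : a*a*(b*b)*(a*a) = a*a := by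
    calc a*a*(b*b)*(a*a)
        = (a*(b*a))*((a*b)*(b*a))*((a*b)*a) := by rw [h1', h1]; simp only [mul_assoc]
      _ = a*((((b*a)*(a*b))*((b*a)*(a*b)))*a) := by simp only [mul_assoc]
      _ = a*(((b*a)*(a*b))*a) := by rw [hfe]
      _ = (a*(b*a))*((a*b)*a) := by simp only [mul_assoc]
      _ = a*a := by rw [h1, h1']
  -- key2 : b² a² b² = b²
  have key2 : b*b*(a*a)*(b*b) = b*b := by
    calc b*b*(a*a)*(b*b)
        = (b*(a*b))*((b*a)*(a*b))*((b*a)*b) := by rw [h2', h2]; simp only [mul_assoc]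
      _ = b*((((a*b)*(b*a))*((a*b)*(b*a)))*b) := by simp only [mul_assoc]
      _ = b*(((a*b)*(b*a))*b) := by rw [hef]
      _ = (b*(a*b))*((b*a)*b) := by simp only [mul_assoc]
      _ = b*b := by rw [h2, h2']
  tfae_have 1 → 2 := by
    rintro ⟨x, hx⟩
    calc a = a*a*x := hx
      _ = (a*a*(b*b)*(a*a))*x := by rw [key1]
      _ = a*a*(b*b)*(a*a*x) := by simp only [mul_assoc]
      _ = a*a*(b*b)*a := by rw [← hx]
      _ = a*a*(b*b*a) := by simp only [mul_assoc]
  tfae_have 2 → 3 := by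
    intro h
    calc a*b = (a*a*(b*b*a))*b := by rw [← h]
      _ = a*a*(b*(b*a*b)) := by simp only [mul_assoc]
      _ = a*a*(b*b) := by rw [h2]
  tfae_have 3 → 4 := by
    intro h
    calc b = b*a*b := h2.symm
      _ = b*(a*b) := by rw [mul_assoc]
      _ = b*(a*a*(b*b)) := by rw [h]
      _ = b*(a*a)*(b*b) := by simp only [mul_assoc]
  tfae_have 4 → 5 := fun h => ⟨b*(a*a), h⟩
  tfae_have 5 → 1 := by
    rintro ⟨y, hy⟩
    have h4 : b = b*(a*a)*(b*b) := by
      calc b = y*(b*b) := hy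
        _ = y*(b*b*(a*a)*(b*b)) := by rw [key2]
        _ = (y*(b*b))*(a*a)*(b*b) := by simp only [mul_assoc]
        _ = b*(a*a)*(b*b) := by rw [← hy]
    have h3 : a*b = a*a*(b*b) := by
      calc a*b = a*(b*(a*a)*(b*b)) := by conv_lhs => rw [h4]
        _ = (a*(b*a))*(a*(b*b)) := by simp only [mul_assoc]
        _ = a*(a*(b*b)) := by rw [h1']
        _ = a*a*(b*b) := by rw [← mul_assoc]
    refine ⟨(b*b)*a, ?_⟩
    calc a = a*b*a := h1.symm
      _ = (a*a*(b*b))*a := by rw [h3]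
      _ = a*a*((b*b)*a) := by simp only [mul_assoc]
  tfae_finish


end PaperStmt
end

section
/- Let S be an orthodox semigroup, a ∈ S, b an inverse of a, and suppose ab = a²b² and ba = b²a². Then the H-class of a is a group with identity element ab²a, and the H-class of b is a group with identity element ba²b. -/
namespace PaperStmt

section Aux

variable {M : Type*} [Monoid M]

lemma grm_symm {x y : M} (h : GreenRM x y) : GreenRM y x := ⟨h.2, h.1⟩

lemma grm_trans {x y z : M} (h1 : GreenRM x y) (h2 : GreenRM y z) : GreenRM x z := by
  obtain ⟨⟨s, hs⟩, ⟨t, ht⟩⟩ := h1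
  obtain ⟨⟨u, hu⟩, ⟨v, hv⟩⟩ := h2
  exact ⟨⟨u * s, by rw [hs, hu, mul_assoc]⟩, ⟨t * v, by rw [hv, ht, mul_assoc]⟩⟩

lemma glm_symm {x y : M} (h : GreenLM x y) : GreenLM y x := ⟨h.2, h.1⟩

lemma glm_trans {x y z : M} (h1 : GreenLM x y) (h2 : GreenLM y z) : GreenLM x z := by
  obtain ⟨⟨s, hs⟩, ⟨t, ht⟩⟩ := h1
  obtain ⟨⟨u, hu⟩, ⟨v, hv⟩⟩ := h2
  exact ⟨⟨s * u, by rw [hs, hu, mul_assoc]⟩, ⟨v * t, by rw [hv, ht, mul_assoc]⟩⟩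

end Aux

lemma gh_symm {S : Type*} [Semigroup S] {x y : S} (h : GreenH x y) : GreenH y x :=
  ⟨grm_symm h.1, glm_symm h.2⟩

lemma gh_trans {S : Type*} [Semigroup S] {x y z : S} (h1 : GreenH x y) (h2 : GreenH y z) :
    GreenH x z := ⟨grm_trans h1.1 h2.1, glm_trans h1.2 h2.2⟩

/-- Green's theorem: an H-class containing an idempotent is a group. -/
lemma key {S : Type*} [Semigroup S] (a e : S) (hee : e * e = e) (hH : GreenH e a) :
    HClassGroupWithId a e := by
  have hEE : ((e : WithOne S)) * e = e := by
    rw [← WithOne.coe_mul, hee]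
  refine ⟨hH, hee, ?_, ?_⟩
  · intro x hx
    have hxe : GreenH x e := gh_trans hx (gh_symm hH)
    obtain ⟨⟨s, hs⟩, -⟩ := hxe.1
    obtain ⟨⟨t, ht⟩, -⟩ := hxe.2
    constructor
    · have : ((e * x : S) : WithOne S) = (x : WithOne S) := by
        rw [WithOne.coe_mul, hs, ← mul_assoc, hEE]
      exact WithOne.coe_inj.mp this
    · have : ((x * e : S) : WithOne S) = (x : WithOne S) := by
        rw [WithOne.coe_mul, ht, mul_assoc, hEE]
      exact WithOne.coe_inj.mp this
  · intro x hx
    have hxe : GreenH x e := gh_trans hx (gh_symm hH)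
    obtain ⟨⟨s, hs⟩, ⟨v, hv⟩⟩ := hxe.1
    obtain ⟨⟨t, ht⟩, ⟨w, hw⟩⟩ := hxe.2
    -- hs : ↑x = ↑e * s, hv : ↑e = ↑x * v, ht : ↑x = t * ↑e, hw : ↑e = w * ↑x
    have hxE : (x : WithOne S) * e = x := by rw [ht, mul_assoc, hEE]
    have hEx : (e : WithOne S) * x = x := by rw [hs, ← mul_assoc, hEE]
    set yM : WithOne S := (e : WithOne S) * v * e with hyM
    set zM : WithOne S := (e : WithOne S) * w * e with hzM
    have hxy : (x : WithOne S) * yM = e := by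
      rw [hyM, ← mul_assoc, ← mul_assoc, hxE, ← hv, hEE]
    have hzx : zM * (x : WithOne S) = e := by
      rw [hzM, mul_assoc, mul_assoc, hEx, ← hw, hEE]
    have hEy : (e : WithOne S) * yM = yM := by
      rw [hyM, ← mul_assoc, ← mul_assoc, hEE]
    have hzE : zM * (e : WithOne S) = zM := by
      rw [hzM, mul_assoc, mul_assoc, hEE, ← mul_assoc]
    have hyz : zM = yM := by
      calc zM = zM * e := hzE.symm
        _ = zM * ((x : WithOne S) * yM) := by rw [hxy]
        _ = zM * (x : WithOne S) * yM := (mul_assoc zM _ _).symm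
        _ = e * yM := by rw [hzx]
        _ = yM := hEy
    have hyx : yM * (x : WithOne S) = e := by rw [← hyz]; exact hzx
    -- yM is the coercion of an element of S
    obtain ⟨y, hy⟩ : ∃ y : S, (y : WithOne S) = yM := by
      rcases eq_or_ne v 1 with rfl | hne
      · exact ⟨e * e, by simp [hyM, WithOne.coe_mul]⟩
      · obtain ⟨v₀, rfl⟩ := WithOne.ne_one_iff_exists.mp hne
        exact ⟨e * v₀ * e, by simp [hyM, WithOne.coe_mul]⟩
    have hyHe : GreenH y e := by
      refine ⟨⟨⟨v * e, by rw [hy, hyM, mul_assoc]⟩, ⟨x, by rw [← hyx, hy]⟩⟩,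
        ⟨⟨(e : WithOne S) * v, by rw [hy, hyM]⟩, ⟨x, by rw [← hxy, hy]⟩⟩⟩
    refine ⟨y, gh_trans hyHe hH, ?_, ?_⟩
    · exact WithOne.coe_inj.mp (by rw [WithOne.coe_mul, hy, hxy])
    · exact WithOne.coe_inj.mp (by rw [WithOne.coe_mul, hy, hyx])

theorem stmt3 {S : Type*} [Semigroup S] (hO : Orthodox S) (a b : S)
    (h1 : a * b * a = a) (h2 : b * a * b = b)
    (h3 : a * b = a * a * (b * b)) (h4 : b * a = b * b * (a * a)) :
    HClassGroupWithId a (a * b * b * a) ∧ HClassGroupWithId b (b * a * a * b) := by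
  have ea : (a * b * b * a) * a = a := by
    have h : a * (b * a) = a := by rw [← mul_assoc, h1]
    rw [h4] at h
    calc (a * b * b * a) * a = a * (b * b * (a * a)) := by simp [mul_assoc]
      _ = a := h
  have ae : a * (a * b * b * a) = a := by
    have h : (a * b) * a = a := h1
    rw [h3] at h
    calc a * (a * b * b * a) = a * a * (b * b) * a := by simp [mul_assoc]
      _ = a := h
  have hee : (a * b * b * a) * (a * b * b * a) = a * b * b * a := by
    calc (a * b * b * a) * (a * b * b * a) = ((a * b * b * a) * a) * (b * (b * a)) := by
          simp [mul_assoc]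
      _ = a * (b * (b * a)) := by rw [ea]
      _ = a * b * b * a := by simp [mul_assoc]
  have fb : (b * a * a * b) * b = b := by
    have h : b * (a * b) = b := by rw [← mul_assoc, h2]
    rw [h3] at h
    calc (b * a * a * b) * b = b * (a * a * (b * b)) := by simp [mul_assoc]
      _ = b := h
  have bf : b * (b * a * a * b) = b := by
    have h : (b * a) * b = b := h2
    rw [h4] at h
    calc b * (b * a * a * b) = b * b * (a * a) * b := by simp [mul_assoc]
      _ = b := h
  have hff : (b * a * a * b) * (b * a * a * b) = b * a * a * b := by
    calc (b * a * a * b) * (b * a * a * b) = ((b * a * a * b) * b) * (a * (a * b)) := by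
          simp [mul_assoc]
      _ = b * (a * (a * b)) := by rw [fb]
      _ = b * a * a * b := by simp [mul_assoc]
  have hHa : GreenH (a * b * b * a) a := by
    refine ⟨⟨⟨((b : WithOne S) * b * a), ?_⟩, ⟨a, ?_⟩⟩,
      ⟨⟨((a : WithOne S) * b * b), ?_⟩, ⟨a, ?_⟩⟩⟩
    · simp [← WithOne.coe_mul, mul_assoc]
    · rw [← WithOne.coe_mul, ea]
    · simp [← WithOne.coe_mul]
    · rw [← WithOne.coe_mul, ae]
  have hHb : GreenH (b * a * a * b) b := by
    refine ⟨⟨⟨((a : WithOne S) * a * b), ?_⟩, ⟨b, ?_⟩⟩,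
      ⟨⟨((b : WithOne S) * a * a), ?_⟩, ⟨b, ?_⟩⟩⟩
    · simp [← WithOne.coe_mul, mul_assoc]
    · rw [← WithOne.coe_mul, fb]
    · simp [← WithOne.coe_mul]
    · rw [← WithOne.coe_mul, bf]
  exact ⟨key a _ hee hHa, key b _ hff hHb⟩

end PaperStmt
end

section
/- Let S be an orthodox semigroup, a ∈ S, b an inverse of a, with ab = a²b² and such that a does not lie in any subgroup of S. Then a has infinite order, i.e., the powers aⁿ (n ≥ 1) are pairwise distinct. -/
namespace PaperStmt

private def spow {S : Type*} [Semigroup S] (a : S) : ℕ → S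
  | 0 => a
  | k+1 => spow a k * a

private lemma spow_congr {S : Type*} [Semigroup S] (a : S) {i j : ℕ} (h : i = j) :
    spow a i = spow a j := by rw [h]

private lemma spow_mul {S : Type*} [Semigroup S] (a : S) (i j : ℕ) :
    spow a i * spow a j = spow a (i + j + 1) := by
  induction j with
  | zero => rfl
  | succ j ih =>
    show spow a i * (spow a j * a) = spow a (i + j + 1) * a
    rw [← mul_assoc, ih]

private lemma spow_swap {S : Type*} [Semigroup S] (x : S) : ∀ t, x * spow x t = spow x t * x
  | 0 => rfl
  | t+1 => by
    show x * (spow x t * x) = (spow x t * x) * x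
    rw [← mul_assoc, spow_swap x t]

private lemma key_s5 {S : Type*} [Semigroup S] (a c : S) (h : a = a * a * c)
    (i s0 : ℕ) (hp : spow a i = spow a (i + (s0 + 1))) : InSubgroup a := by
  have L1 : ∀ t, spow a t = spow a (t + 1) * c := by
    intro t
    cases t with
    | zero => exact h
    | succ t =>
      show spow a t * a = ((spow a t * a) * a) * c
      calc spow a t * a = spow a t * (a * a * c) := by rw [← h]
        _ = ((spow a t * a) * a) * c := by simp only [mul_assoc]
  have L2 : ∀ k, a = spow a (k + 1) * spow c k := by
    intro k
    induction k with
    | zero => exact L1 0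
    | succ k ih =>
      calc a = spow a (k+1) * spow c k := ih
        _ = (spow a (k+1+1) * c) * spow c k := by rw [← L1 (k+1)]
        _ = spow a (k+1+1) * (c * spow c k) := by rw [mul_assoc]
        _ = spow a (k+1+1) * (spow c k * c) := by rw [spow_swap]
        _ = spow a (k+1+1) * spow c (k+1) := rfl
  have hL3 : spow a (i+1) = spow a ((i+1) + (s0+1)) := by
    have h' : spow a (i+1) = spow a ((i+(s0+1))+1) := by
      show spow a i * a = spow a (i+(s0+1)) * a
      rw [hp]
    rw [h']
    exact spow_congr a (by omega)
  have haR : spow a (s0+1) = a := by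
    calc spow a (s0+1) = spow a s0 * a := rfl
      _ = spow a s0 * (spow a (i+1) * spow c i) := by rw [← L2 i]
      _ = (spow a s0 * spow a (i+1)) * spow c i := by rw [mul_assoc]
      _ = spow a (s0 + (i+1) + 1) * spow c i := by rw [spow_mul]
      _ = spow a ((i+1) + (s0+1)) * spow c i := by
            rw [spow_congr a (show s0+(i+1)+1 = (i+1)+(s0+1) by omega)]
      _ = spow a (i+1) * spow c i := by rw [← hL3]
      _ = a := (L2 i).symm
  have P : ∀ s, spow a (s + (s0+1)) = spow a s := by
    intro s
    cases s with
    | zero =>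
      show spow a (0 + (s0+1)) = a
      rw [spow_congr a (show 0 + (s0+1) = s0+1 by omega)]
      exact haR
    | succ t =>
      have e : spow a (s0+1) * spow a t = spow a (t+1+(s0+1)) := by
        rw [spow_mul]
        exact spow_congr a (by omega)
      rw [← e, haR, spow_swap]
      rfl
  have PM : ∀ l s, spow a (s + l*(s0+1)) = spow a s := by
    intro l
    induction l with
    | zero => intro s; exact spow_congr a (by omega)
    | succ l ih =>
      intro s
      have e : s + (l+1)*(s0+1) = (s + l*(s0+1)) + (s0+1) := by ring
      rw [spow_congr a e, P, ih]
  refine ⟨Set.range (spow a), ⟨0, rfl⟩, ?_, spow a s0, ⟨s0, rfl⟩, ?_, ?_⟩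
  · rintro x ⟨k, rfl⟩ y ⟨l, rfl⟩
    exact ⟨k + l + 1, (spow_mul a k l).symm⟩
  · rintro x ⟨k, rfl⟩
    constructor
    · rw [spow_mul, spow_congr a (show s0+k+1 = k+(s0+1) by omega), P]
    · rw [spow_mul, spow_congr a (show k+s0+1 = k+(s0+1) by omega), P]
  · rintro x ⟨k, rfl⟩
    refine ⟨spow a ((k+2)*s0), ⟨_, rfl⟩, ?_, ?_⟩
    · rw [spow_mul, spow_congr a (show k+(k+2)*s0+1 = s0+(k+1)*(s0+1) by ring), PM]
    · rw [spow_mul, spow_congr a (show (k+2)*s0+k+1 = s0+(k+1)*(s0+1) by ring), PM]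

private lemma coe_spow {S : Type*} [Semigroup S] (a : S) :
    ∀ k, ((spow a k : S) : WithOne S) = (a : WithOne S)^(k+1)
  | 0 => (pow_one _).symm
  | k+1 => by
    show ((spow a k * a : S) : WithOne S) = _
    rw [WithOne.coe_mul, coe_spow a k, ← pow_succ]

theorem stmt5 {S : Type*} [Semigroup S] (hO : Orthodox S) (a b : S)
    (h1 : a * b * a = a) (h2 : b * a * b = b)
    (h3 : a * b = a * a * (b * b)) (hng : ¬ InSubgroup a) :
    ∀ m n : ℕ, 1 ≤ m → 1 ≤ n → (a : WithOne S) ^ m = (a : WithOne S) ^ n → m = n := by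
  intro m n hm hn heq
  have h' : a = a * a * (b * b * a) := by rw [← mul_assoc, ← h3, h1]
  obtain ⟨i, rfl⟩ : ∃ i, m = i + 1 := ⟨m - 1, by omega⟩
  obtain ⟨j, rfl⟩ : ∃ j, n = j + 1 := ⟨n - 1, by omega⟩
  have hs : spow a i = spow a j := WithOne.coe_inj.mp (by rw [coe_spow, coe_spow]; exact heq)
  rcases Nat.lt_trichotomy i j with hlt | hEq | hgt
  · exact absurd (key_s5 a (b*b*a) h' i (j - i - 1)
      (by rw [spow_congr a (show i + (j-i-1+1) = j by omega)]; exact hs)) hng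
  · omega
  · exact absurd (key_s5 a (b*b*a) h' j (i - j - 1)
      (by rw [spow_congr a (show j + (i-j-1+1) = i by omega)]; exact hs.symm)) hng

end PaperStmt
end

section
/- Let S be an orthodox semigroup, a ∈ S, b an inverse of a, with ab = a²b², and suppose a belongs to no subgroup of S. Then a R aⁿ and a R aⁿb for every positive integer n, where R is Green's R-relation; dually b L bⁿ and b L abⁿ for every positive integer n. -/
namespace PaperStmt

theorem stmt6 {S : Type*} [Semigroup S] (hO : Orthodox S) (a b : S)
    (h1 : a * b * a = a) (h2 : b * a * b = b)
    (h3 : a * b = a * a * (b * b)) (hng : ¬ InSubgroup a) :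
    ∀ n : ℕ, 1 ≤ n →
      GreenRM (a : WithOne S) ((a : WithOne S) ^ n) ∧
      GreenRM (a : WithOne S) ((a : WithOne S) ^ n * (b : WithOne S)) ∧
      GreenLM (b : WithOne S) ((b : WithOne S) ^ n) ∧
      GreenLM (b : WithOne S) ((a : WithOne S) * (b : WithOne S) ^ n) := by
  set A : WithOne S := (a : WithOne S) with hAdef
  set B : WithOne S := (b : WithOne S) with hBdef
  have hA : A * B * A = A := by
    rw [hAdef, hBdef, ← WithOne.coe_mul, ← WithOne.coe_mul, h1]
  have hB : B * A * B = B := by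
    rw [hAdef, hBdef, ← WithOne.coe_mul, ← WithOne.coe_mul, h2]
  have h3' : A * B = A * A * (B * B) := by
    rw [hAdef, hBdef, ← WithOne.coe_mul, ← WithOne.coe_mul, ← WithOne.coe_mul,
      ← WithOne.coe_mul, h3]
  have key : ∀ k : ℕ, A * B = A ^ (k + 1) * B ^ (k + 1) := by
    intro k
    induction k with
    | zero => simp
    | succ k ih =>
      calc A * B = A * (A * B) * B := by
            conv_lhs => rw [h3']
            simp [mul_assoc]
        _ = A * (A ^ (k + 1) * B ^ (k + 1)) * B := by rw [← ih]
        _ = A ^ (k + 2) * B ^ (k + 2) := by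
            rw [pow_succ' A (k + 1), pow_succ B (k + 1)]; simp [mul_assoc]
  intro n hn
  obtain ⟨m, rfl⟩ : ∃ m, n = m + 1 := ⟨n - 1, (Nat.succ_pred_eq_of_pos hn).symm⟩
  have hAkey : A ^ (m + 1) * B ^ (m + 1) * A = A := by rw [← key, hA]
  refine ⟨⟨⟨B ^ (m + 1) * A, ?_⟩, ⟨A ^ m, ?_⟩⟩,
    ⟨⟨B ^ m * A, ?_⟩, ⟨A ^ m * B, ?_⟩⟩,
    ⟨⟨B * A ^ (m + 1), ?_⟩, ⟨B ^ m, ?_⟩⟩,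
    ⟨⟨B * A ^ m, ?_⟩, ⟨A * B ^ m, ?_⟩⟩⟩
  · rw [← mul_assoc, hAkey]
  · rw [← pow_succ']
  · calc A = A ^ (m + 1) * B ^ (m + 1) * A := hAkey.symm
      _ = A ^ (m + 1) * B * (B ^ m * A) := by
          rw [pow_succ' B m]; simp [mul_assoc]
  · rw [← mul_assoc, ← pow_succ']
  · calc B = B * A * B := hB.symm
      _ = B * (A * B) := by rw [mul_assoc]
      _ = B * (A ^ (m + 1) * B ^ (m + 1)) := by rw [← key]
      _ = B * A ^ (m + 1) * B ^ (m + 1) := by rw [mul_assoc]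
  · rw [← pow_succ]
  · calc B = B * A * B := hB.symm
      _ = B * (A ^ (m + 1) * B ^ (m + 1)) := by rw [← key, mul_assoc]
      _ = B * A ^ m * (A * B ^ (m + 1)) := by
          rw [pow_succ A m]; simp [mul_assoc]
  · rw [mul_assoc, ← pow_succ]

end PaperStmt
end

section
/- Let S be an orthodox semigroup, a a nongroup element of S, b an inverse of a, and ab = a²b². Then the subsemigroup of S generated by ba² and b²a is bicyclic with identity element ba; that is, (ba²)(b²a) = ba, (b²a)(ba²) ≠ ba, and ba is a two-sided identity for both ba² and b²a. -/
namespace PaperStmt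

theorem stmt7 {S : Type*} [Semigroup S] (hO : Orthodox S) (a b : S)
    (h1 : a * b * a = a) (h2 : b * a * b = b)
    (h3 : a * b = a * a * (b * b)) (hng : ¬ InSubgroup a) :
    (b * a * a) * (b * b * a) = b * a ∧
    (b * b * a) * (b * a * a) ≠ b * a ∧
    (b * a) * (b * a * a) = b * a * a ∧ (b * a * a) * (b * a) = b * a * a ∧
    (b * a) * (b * b * a) = b * b * a ∧ (b * b * a) * (b * a) = b * b * a := by
  have h1' : a * (b * a) = a := by rw [← mul_assoc, h1]
  have h2' : b * (a * b) = b := by rw [← mul_assoc, h2]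
  have h3' : a * (a * (b * b)) = a * b := by rw [← mul_assoc, ← h3]
  have A : ∀ x : S, a * (b * (a * x)) = a * x := fun x => by
    rw [← mul_assoc, ← mul_assoc, h1]
  have B : ∀ x : S, b * (a * (b * x)) = b * x := fun x => by
    rw [← mul_assoc, ← mul_assoc, h2]
  have C : ∀ x : S, a * (a * (b * (b * x))) = a * (b * x) := fun x => by
    rw [← mul_assoc b b x, ← mul_assoc, ← mul_assoc, ← h3, mul_assoc]
  refine ⟨?_, ?_, ?_, ?_, ?_, ?_⟩
  · simp only [mul_assoc, C, B]
  · -- the hard part: (b*b*a)*(b*a*a) ≠ b*a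
    intro hk
    apply hng
    simp only [mul_assoc, B] at hk
    -- hk : b * (b * (a * a)) = b * a
    have K : ∀ x : S, b * (b * (a * (a * x))) = b * (a * x) := fun x => by
      rw [← mul_assoc a a x, ← mul_assoc b (a*a) x, ← mul_assoc b, hk, mul_assoc]
    have ea : (a * (b * (b * a))) * a = a := by
      simp only [mul_assoc, A, B, C, K, h1', h2', h3', hk]
    have ae : a * (a * (b * (b * a))) = a := by
      simp only [mul_assoc, A, B, C, K, h1', h2', h3', hk]
    have ee : (a * (b * (b * a))) * (a * (b * (b * a))) = a * (b * (b * a)) := by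
      simp only [mul_assoc, A, B, C, K, h1', h2', h3', hk]
    -- n is the inverse of a in the local group at e₁ = a*(b*(b*a))
    have an : a * (a * (b * (b * (a * (b * (b * a)))))) = a * (b * (b * a)) := by
      simp only [mul_assoc, A, B, C, K, h1', h2', h3', hk]
    have na : (a * (b * (b * (a * (b * (b * a)))))) * a = a * (b * (b * a)) := by
      simp only [mul_assoc, A, B, C, K, h1', h2', h3', hk]
    have en : (a * (b * (b * a))) * (a * (b * (b * (a * (b * (b * a)))))) =
        a * (b * (b * (a * (b * (b * a))))) := by
      simp only [mul_assoc, A, B, C, K, h1', h2', h3', hk]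
    have ne' : (a * (b * (b * (a * (b * (b * a)))))) * (a * (b * (b * a))) =
        a * (b * (b * (a * (b * (b * a))))) := by
      simp only [mul_assoc, A, B, C, K, h1', h2', h3', hk]
    -- the group of units of the local monoid e₁ S e₁
    refine ⟨{x | (a * (b * (b * a))) * x = x ∧ x * (a * (b * (b * a))) = x ∧
        ∃ y, (a * (b * (b * a))) * y = y ∧ y * (a * (b * (b * a))) = y ∧
          x * y = a * (b * (b * a)) ∧ y * x = a * (b * (b * a))}, ?_, ?_, ?_⟩
    · exact ⟨ea, ae, a * (b * (b * (a * (b * (b * a))))), en, ne', an, na⟩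
    · rintro x ⟨ex, xe, y, ey, ye, xy, yx⟩ x' ⟨ex', x'e, y', ey', y'e, xy', y'x⟩
      refine ⟨by rw [← mul_assoc, ex], by rw [mul_assoc, x'e], y' * y,
        by rw [← mul_assoc, ey'], by rw [mul_assoc, ye], ?_, ?_⟩
      · rw [mul_assoc, ← mul_assoc x' y', xy', ey, xy]
      · rw [mul_assoc, ← mul_assoc y x, yx, ex', y'x]
    · refine ⟨a * (b * (b * a)), ⟨ee, ee, a * (b * (b * a)), ee, ee, ee, ee⟩, ?_, ?_⟩
      · rintro x ⟨ex, xe, -⟩; exact ⟨ex, xe⟩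
      · rintro x ⟨ex, xe, y, ey, ye, xy, yx⟩
        exact ⟨y, ⟨ey, ye, x, ex, xe, yx, xy⟩, xy, yx⟩
  · simp only [mul_assoc, B]
  · simp only [mul_assoc, h1']
  · simp only [mul_assoc, B]
  · simp only [mul_assoc, h1']

end PaperStmt
end

section
/- Let S be an orthodox semigroup, a ∈ S, b an inverse of a, with ab = a²b². Then for every positive integer k, (ba²)ᵏ = ba^{k+1} and (b²a)ᵏ = b^{k+1}a. -/
namespace PaperStmt

lemma aux8 {M : Type*} [Monoid M] (a b : M) (h1 : a * b * a = a) (h2 : b * a * b = b) :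
    ∀ k : ℕ, 1 ≤ k → (b * a * a) ^ k = b * a ^ (k + 1) ∧ (b * b * a) ^ k = b ^ (k + 1) * a := by
  intro k hk
  induction k, hk using Nat.le_induction with
  | base => constructor <;> simp [pow_succ, mul_assoc]
  | succ n hn ih =>
    have h1' : a * (b * a) = a := by rw [← mul_assoc, h1]
    have h2' : b * (a * b) = b := by rw [← mul_assoc, h2]
    constructor
    · rw [pow_succ, ih.1]
      calc b * a ^ (n + 1) * (b * a * a)
          = b * (a ^ n * (a * (b * a)) * a) := by
            rw [pow_succ]; simp [mul_assoc]
        _ = b * a ^ (n + 2) := by rw [h1']; simp [pow_succ, mul_assoc]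
    · rw [pow_succ, ih.2]
      calc b ^ (n + 1) * a * (b * b * a)
          = b ^ n * (b * (a * b)) * (b * a) := by
            rw [pow_succ]; simp [mul_assoc]
        _ = b ^ (n + 2) * a := by rw [h2']; simp [pow_succ, mul_assoc]

theorem stmt8 {S : Type*} [Semigroup S] (hO : Orthodox S) (a b : S)
    (h1 : a * b * a = a) (h2 : b * a * b = b)
    (h3 : a * b = a * a * (b * b)) :
    ∀ k : ℕ, 1 ≤ k →
      ((b * a * a : S) : WithOne S) ^ k = (b : WithOne S) * (a : WithOne S) ^ (k + 1) ∧
      ((b * b * a : S) : WithOne S) ^ k = (b : WithOne S) ^ (k + 1) * (a : WithOne S) := by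
  have H1 : (a : WithOne S) * b * a = a := by
    rw [← WithOne.coe_mul, ← WithOne.coe_mul, h1]
  have H2 : (b : WithOne S) * a * b = b := by
    rw [← WithOne.coe_mul, ← WithOne.coe_mul, h2]
  intro k hk
  have := aux8 (a : WithOne S) (b : WithOne S) H1 H2 k hk
  simpa [WithOne.coe_mul] using this

end PaperStmt
end

section
/- Let S be an orthodox semigroup, a a nongroup element, b an inverse of a, ab = a²b², and S = ⟨a,b⟩. Then every element of S can be written in the form aⁱbᵐaⁿbʲ where i, j ∈ {0,1}, m, n ≥ 0, and either (m > i and n = j = 0), or (m = i = 0 and n ≥ 1), or (m > i and n > j). -/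
/-!
In the monoid `S¹` the elements in normal form include `a` and `b` and are closed under left
multiplication by `a` and by `b`: `ab = a²b²` gives `a · aⁱbᵐ = abᵐ⁻ⁱ`, `bab = b` gives
`b · aⁱbᵐ = bᵐ⁺¹⁻ⁱ` (both for `i < m`), and `aba = a` gives `ab · aⁿ = aⁿ` for `n ≥ 1`.
Since `a` and `b` generate `S`, every element of `S` has a normal form.
-/

namespace PaperStmt

theorem _root_.Subsemigroup.closure_induction_left {M : Type*} [Semigroup M] {s : Set M}
    {p : M → Prop} (mem : ∀ x ∈ s, p x) (mul_left : ∀ x ∈ s, ∀ y, p y → p (x * y))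
    {z : M} (hz : z ∈ Subsemigroup.closure s) : p z := by
  suffices h : p z ∧ ∀ y, p y → p (z * y) from h.1
  induction hz using Subsemigroup.closure_induction with
  | mem x hx => exact ⟨mem x hx, mul_left x hx⟩
  | mul x y _ _ hx hy =>
    exact ⟨hx.2 y hy.1, fun w hw => by rw [mul_assoc]; exact hx.2 _ (hy.2 w hw)⟩

section NormalForm

variable {M : Type*} [Monoid M] {A B : M}

def IsNormalForm (A B w : M) : Prop :=
  ∃ i j m n : ℕ, i ≤ 1 ∧ j ≤ 1 ∧ w = A ^ i * B ^ m * A ^ n * B ^ j ∧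
    ((i < m ∧ n = 0 ∧ j = 0) ∨ (m = 0 ∧ i = 0 ∧ 1 ≤ n) ∨ (i < m ∧ j < n))

theorem isNormalForm_pow_mul_pow_of_lt {i m : ℕ} (hi : i ≤ 1) (him : i < m) :
    IsNormalForm A B (A ^ i * B ^ m) :=
  ⟨i, 0, m, 0, hi, zero_le_one, by simp, Or.inl ⟨him, rfl, rfl⟩⟩

theorem isNormalForm_pow_mul_pow_of_one_le {n j : ℕ} (hn : 1 ≤ n) (hj : j ≤ 1) :
    IsNormalForm A B (A ^ n * B ^ j) :=
  ⟨0, j, 0, n, zero_le_one, hj, by simp, Or.inr (Or.inl ⟨rfl, rfl, hn⟩)⟩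

theorem isNormalForm_of_lt_of_lt {i j m n : ℕ} (hi : i ≤ 1) (hj : j ≤ 1) (him : i < m)
    (hjn : j < n) : IsNormalForm A B (A ^ i * B ^ m * A ^ n * B ^ j) :=
  ⟨i, j, m, n, hi, hj, rfl, Or.inr (Or.inr ⟨him, hjn⟩)⟩

theorem isNormalForm_left (A B : M) : IsNormalForm A B A := by
  simpa using isNormalForm_pow_mul_pow_of_one_le (A := A) (B := B) le_rfl zero_le_one

theorem isNormalForm_right (A B : M) : IsNormalForm A B B := by
  simpa using isNormalForm_pow_mul_pow_of_lt (A := A) (B := B) zero_le_one zero_lt_one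

theorem isNormalForm_mul_pow {k : ℕ} (hk : 1 ≤ k) : IsNormalForm A B (A * B ^ k) := by
  rcases hk.eq_or_lt with rfl | hk
  · simpa using isNormalForm_pow_mul_pow_of_one_le (A := A) (B := B) le_rfl le_rfl
  · simpa using isNormalForm_pow_mul_pow_of_lt (A := A) (B := B) le_rfl hk

theorem mul_pow_mul_pow_eq_mul_pow_sub (h3 : A * B = A * A * (B * B)) {i m : ℕ} (hi : i ≤ 1)
    (him : i < m) : A * (A ^ i * B ^ m) = A * B ^ (m - i) := by
  interval_cases i
  · simp
  · obtain ⟨k, rfl⟩ : ∃ k, m = k + 2 := ⟨m - 2, by omega⟩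
    calc A * (A ^ 1 * B ^ (k + 2)) = A * A * (B * B) * B ^ k := by
          rw [pow_one, add_comm, pow_add, sq]; simp only [mul_assoc]
      _ = A * B ^ (k + 2 - 1) := by rw [← h3, mul_assoc, ← pow_succ']; rfl

theorem mul_pow_mul_pow_eq_pow_sub (h2 : B * A * B = B) {i m : ℕ} (hi : i ≤ 1) (him : i < m) :
    B * (A ^ i * B ^ m) = B ^ (m + 1 - i) := by
  interval_cases i
  · simp [pow_succ']
  · obtain ⟨k, rfl⟩ : ∃ k, m = k + 1 := ⟨m - 1, by omega⟩
    calc B * (A ^ 1 * B ^ (k + 1)) = B * A * B * B ^ k := by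
          rw [pow_one, pow_succ']; simp only [mul_assoc]
      _ = B ^ (k + 1 + 1 - 1) := by rw [h2, ← pow_succ']; rfl

theorem mul_mul_pow_eq_pow (h1 : A * B * A = A) {n : ℕ} (hn : 1 ≤ n) : A * B * A ^ n = A ^ n := by
  obtain ⟨k, rfl⟩ : ∃ k, n = k + 1 := ⟨n - 1, by omega⟩
  rw [pow_succ', ← mul_assoc, h1]

theorem IsNormalForm.A_mul (h1 : A * B * A = A) (h3 : A * B = A * A * (B * B)) {w : M}
    (hw : IsNormalForm A B w) : IsNormalForm A B (A * w) := by
  obtain ⟨i, j, m, n, hi, hj, rfl, ⟨him, rfl, rfl⟩ | ⟨rfl, rfl, hn⟩ | ⟨him, hjn⟩⟩ := hw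
  · rw [pow_zero, pow_zero, mul_one, mul_one, mul_pow_mul_pow_eq_mul_pow_sub h3 hi him]
    exact isNormalForm_mul_pow (by omega)
  · rw [pow_zero, pow_zero, mul_one, one_mul, ← mul_assoc, ← pow_succ']
    exact isNormalForm_pow_mul_pow_of_one_le (by omega) hj
  · rw [show A * (A ^ i * B ^ m * A ^ n * B ^ j) = A * (A ^ i * B ^ m) * (A ^ n * B ^ j) by
      simp only [mul_assoc], mul_pow_mul_pow_eq_mul_pow_sub h3 hi him]
    obtain hk | hk := (show 1 ≤ m - i by omega).eq_or_lt
    · rw [← hk, pow_one, ← mul_assoc, mul_mul_pow_eq_pow h1 (by omega)]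
      exact isNormalForm_pow_mul_pow_of_one_le (by omega) hj
    · simpa only [pow_one, mul_assoc] using isNormalForm_of_lt_of_lt (A := A) le_rfl hj hk hjn

theorem IsNormalForm.B_mul (h2 : B * A * B = B) {w : M} (hw : IsNormalForm A B w) :
    IsNormalForm A B (B * w) := by
  obtain ⟨i, j, m, n, hi, hj, rfl, ⟨him, rfl, rfl⟩ | ⟨rfl, rfl, hn⟩ | ⟨him, hjn⟩⟩ := hw
  · rw [pow_zero, pow_zero, mul_one, mul_one, mul_pow_mul_pow_eq_pow_sub h2 hi him]
    simpa using isNormalForm_pow_mul_pow_of_lt (A := A) zero_le_one (by omega : 0 < m + 1 - i)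
  · rw [pow_zero, pow_zero, mul_one, one_mul]
    interval_cases j
    · simpa using isNormalForm_of_lt_of_lt (A := A) (B := B) zero_le_one zero_le_one zero_lt_one hn
    · rcases hn.eq_or_lt with rfl | hn
      · rw [pow_one, pow_one, ← mul_assoc, h2]
        exact isNormalForm_right A B
      · simpa [mul_assoc] using
          isNormalForm_of_lt_of_lt (A := A) (B := B) zero_le_one le_rfl zero_lt_one hn
  · rw [show B * (A ^ i * B ^ m * A ^ n * B ^ j) = B * (A ^ i * B ^ m) * (A ^ n * B ^ j) by
      simp only [mul_assoc], mul_pow_mul_pow_eq_pow_sub h2 hi him]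
    simpa [mul_assoc] using
      isNormalForm_of_lt_of_lt (A := A) zero_le_one hj (by omega : 0 < m + 1 - i) hjn

end NormalForm

theorem stmt10_general {S : Type*} [Semigroup S] (a b : S)
    (hgen : Subsemigroup.closure ({a, b} : Set S) = ⊤)
    (h1 : a * b * a = a) (h2 : b * a * b = b)
    (h3 : a * b = a * a * (b * b)) :
    ∀ s : S, ∃ i j m n : ℕ, i ≤ 1 ∧ j ≤ 1 ∧
      (s : WithOne S) =
        (a : WithOne S) ^ i * (b : WithOne S) ^ m * (a : WithOne S) ^ n * (b : WithOne S) ^ j ∧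
      ((i < m ∧ n = 0 ∧ j = 0) ∨ (m = 0 ∧ i = 0 ∧ 1 ≤ n) ∨ (i < m ∧ j < n)) := by
  intro s
  show IsNormalForm (a : WithOne S) b s
  have h1' : (a : WithOne S) * b * a = a := by exact_mod_cast h1
  have h2' : (b : WithOne S) * a * b = b := by exact_mod_cast h2
  have h3' : (a : WithOne S) * b = a * a * (b * b) := by exact_mod_cast h3
  refine Subsemigroup.closure_induction_left (p := fun s : S => IsNormalForm (a : WithOne S) b s)
    ?_ ?_ (hgen ▸ Subsemigroup.mem_top s)
  · rintro x (rfl | rfl)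
    exacts [isNormalForm_left _ _, isNormalForm_right _ _]
  · rintro x (rfl | rfl) y hy <;> rw [WithOne.coe_mul]
    exacts [hy.A_mul h1' h3', hy.B_mul h2']

theorem stmt10 {S : Type*} [Semigroup S] (hO : Orthodox S) (a b : S)
    (hgen : Subsemigroup.closure ({a, b} : Set S) = ⊤)
    (h1 : a * b * a = a) (h2 : b * a * b = b)
    (h3 : a * b = a * a * (b * b)) (hng : ¬ InSubgroup a) :
    ∀ s : S, ∃ i j m n : ℕ, i ≤ 1 ∧ j ≤ 1 ∧
      (s : WithOne S) =
        (a : WithOne S) ^ i * (b : WithOne S) ^ m * (a : WithOne S) ^ n * (b : WithOne S) ^ j ∧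
      ((i < m ∧ n = 0 ∧ j = 0) ∨ (m = 0 ∧ i = 0 ∧ 1 ≤ n) ∨ (i < m ∧ j < n)) :=
  stmt10_general a b hgen h1 h2 h3

end PaperStmt
end

section
/- Let S = ⟨a,b⟩ be an orthodox semigroup generated by mutually inverse elements a, b with ab = a²b² and ba ≠ b²a². If i, j ∈ {0,1}, m > i, n > j, then aⁱbᵐ R aⁱbᵐaⁿbʲ and aⁱbᵐaⁿbʲ L aⁿbʲ, where R and L are Green's relations on S. -/
namespace PaperStmt

section Aux
variable {M : Type*} [Monoid M] {A B : M}

lemma pow_eq (h3 : A * B = A * A * (B * B)) :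
    ∀ k : ℕ, A ^ (k+1) * B ^ (k+1) = A * B := by
  intro k
  induction k with
  | zero => simp
  | succ k ih =>
      calc A ^ (k+2) * B ^ (k+2)
          = A * A ^ (k+1) * (B ^ (k+1) * B) := by rw [pow_succ' A, pow_succ B]
        _ = A * (A ^ (k+1) * B ^ (k+1)) * B := by simp [mul_assoc]
        _ = A * (A * B) * B := by rw [ih]
        _ = A * A * (B * B) := by simp [mul_assoc]
        _ = A * B := h3.symm

lemma bk_ab (hBAB : B * A * B = B) (k : ℕ) : B ^ (k+1) * (A * B) = B ^ (k+1) := by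
  calc B ^ (k+1) * (A * B) = B ^ k * (B * A * B) := by
        rw [pow_succ]; simp [mul_assoc]
    _ = B ^ k * B := by rw [hBAB]
    _ = B ^ (k+1) := (pow_succ B k).symm

lemma ab_ak (hABA : A * B * A = A) (k : ℕ) : (A * B) * A ^ (k+1) = A ^ (k+1) := by
  calc (A * B) * A ^ (k+1) = (A * B * A) * A ^ k := by
        rw [pow_succ' A]; simp [mul_assoc]
    _ = A * A ^ k := by rw [hABA]
    _ = A ^ (k+1) := (pow_succ' A k).symm

lemma aba_pow (hABA : A * B * A = A) (h3 : A * B = A * A * (B * B)) (k : ℕ) :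
    A ^ (k+1) * B ^ (k+1) * A ^ (k+1) = A ^ (k+1) := by
  rw [pow_eq h3, ab_ak hABA]

end Aux

theorem stmt11 {S : Type*} [Semigroup S] (hO : Orthodox S) (a b : S)
    (hgen : Subsemigroup.closure ({a, b} : Set S) = ⊤)
    (h1 : a * b * a = a) (h2 : b * a * b = b)
    (h3 : a * b = a * a * (b * b)) (h4 : b * a ≠ b * b * (a * a)) :
    ∀ i j m n : ℕ, i ≤ 1 → j ≤ 1 → i < m → j < n →
      GreenRM ((a : WithOne S) ^ i * (b : WithOne S) ^ m)
              ((a : WithOne S) ^ i * (b : WithOne S) ^ m *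
                (a : WithOne S) ^ n * (b : WithOne S) ^ j) ∧
      GreenLM ((a : WithOne S) ^ i * (b : WithOne S) ^ m *
                (a : WithOne S) ^ n * (b : WithOne S) ^ j)
              ((a : WithOne S) ^ n * (b : WithOne S) ^ j) := by
  intro i j m n hi hj him hjn
  have hABA : (a : WithOne S) * (b : WithOne S) * (a : WithOne S) = (a : WithOne S) := by
    exact_mod_cast h1
  have hBAB : (b : WithOne S) * (a : WithOne S) * (b : WithOne S) = (b : WithOne S) := by
    exact_mod_cast h2
  have h3' : (a : WithOne S) * (b : WithOne S) =
      (a : WithOne S) * (a : WithOne S) * ((b : WithOne S) * (b : WithOne S)) := by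
    exact_mod_cast h3
  set A : WithOne S := (a : WithOne S) with hA
  set B : WithOne S := (b : WithOne S) with hB
  obtain ⟨m', rfl⟩ : ∃ m', m = m' + 1 := ⟨m - 1, by omega⟩
  obtain ⟨n', rfl⟩ : ∃ n', n = n' + 1 := ⟨n - 1, by omega⟩
  obtain ⟨k, hk⟩ : ∃ k, n' + 1 = j + (k + 1) := ⟨n' - j, by omega⟩
  obtain ⟨l, hl⟩ : ∃ l, m' + 1 = i + (l + 1) := ⟨m' - i, by omega⟩
  have hApow : A ^ (l+1) * A ^ i = A ^ (m'+1) := by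
    rw [← pow_add]; congr 1; omega
  refine ⟨⟨⟨B ^ (k+1), ?_⟩, ⟨A ^ (n'+1) * B ^ j, by simp [mul_assoc]⟩⟩,
         ⟨⟨A ^ i * B ^ (m'+1), by simp [mul_assoc]⟩,
          ⟨A ^ (n'+1) * B ^ (n'+1) * A ^ (l+1), ?_⟩⟩⟩
  · calc A ^ i * B ^ (m'+1)
        = A ^ i * (B ^ (m'+1) * (A * B)) := by rw [bk_ab hBAB]
      _ = A ^ i * (B ^ (m'+1) * (A ^ (n'+1) * B ^ (n'+1))) := by rw [pow_eq h3']
      _ = A ^ i * B ^ (m'+1) * A ^ (n'+1) * (B ^ j * B ^ (k+1)) := by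
            rw [← pow_add, ← hk]; simp [mul_assoc]
      _ = A ^ i * B ^ (m'+1) * A ^ (n'+1) * B ^ j * B ^ (k+1) := by simp [mul_assoc]
  · calc A ^ (n'+1) * B ^ j
        = A ^ (n'+1) * B ^ (n'+1) * A ^ (n'+1) * B ^ j := by rw [aba_pow hABA h3']
      _ = A ^ (n'+1) * (B ^ (n'+1) * (A * B)) * A ^ (n'+1) * B ^ j := by
            rw [bk_ab hBAB]
      _ = A ^ (n'+1) * (B ^ (n'+1) * (A ^ (m'+1) * B ^ (m'+1))) * A ^ (n'+1) * B ^ j := by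
            rw [pow_eq h3']
      _ = A ^ (n'+1) * B ^ (n'+1) * A ^ (l+1) * (A ^ i * B ^ (m'+1) * A ^ (n'+1) * B ^ j) := by
            rw [← hApow]; simp [mul_assoc]

end PaperStmt
end

section
/- Let S = ⟨a,b⟩ be an orthodox semigroup generated by mutually inverse elements a, b satisfying ab = a²b² and ba ≠ b²a². Then S is bisimple, i.e., Green's D-relation on S is the universal relation. -/
namespace PaperStmt

set_option linter.unusedSectionVars false
set_option linter.unusedVariables false
set_option linter.unnecessarySimpa false

section Aux
variable {S : Type*} [Semigroup S]

private lemma coe_one_or (v : WithOne S) : v = 1 ∨ ∃ s : S, v = (s : WithOne S) :=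
  WithOne.cases_on v (Or.inl rfl) (fun s => Or.inr ⟨s, rfl⟩)

private lemma greenR_def {x y : S} :
    GreenR x y ↔ (∃ s, (x : WithOne S) = (y : WithOne S) * s) ∧
      (∃ s, (y : WithOne S) = (x : WithOne S) * s) := Iff.rfl

private lemma greenL_def {x y : S} :
    GreenL x y ↔ (∃ s, (x : WithOne S) = s * (y : WithOne S)) ∧
      (∃ s, (y : WithOne S) = s * (x : WithOne S)) := Iff.rfl

private lemma greenR_refl (x : S) : GreenR x x :=
  greenR_def.mpr ⟨⟨1, (mul_one _).symm⟩, ⟨1, (mul_one _).symm⟩⟩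
private lemma greenL_refl (x : S) : GreenL x x :=
  greenL_def.mpr ⟨⟨1, (one_mul _).symm⟩, ⟨1, (one_mul _).symm⟩⟩
private lemma greenR_symm {x y : S} (h : GreenR x y) : GreenR y x :=
  greenR_def.mpr ⟨(greenR_def.mp h).2, (greenR_def.mp h).1⟩
private lemma greenL_symm {x y : S} (h : GreenL x y) : GreenL y x :=
  greenL_def.mpr ⟨(greenL_def.mp h).2, (greenL_def.mp h).1⟩

private lemma greenR_trans {x y z : S} (h : GreenR x y) (h' : GreenR y z) : GreenR x z := by
  obtain ⟨⟨s, hs⟩, ⟨t, ht⟩⟩ := greenR_def.mp h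
  obtain ⟨⟨u, hu⟩, ⟨v, hv⟩⟩ := greenR_def.mp h'
  refine greenR_def.mpr ⟨⟨u * s, ?_⟩, ⟨t * v, ?_⟩⟩
  · rw [hs, hu, mul_assoc]
  · rw [hv, ht, mul_assoc]

private lemma greenL_trans {x y z : S} (h : GreenL x y) (h' : GreenL y z) : GreenL x z := by
  obtain ⟨⟨s, hs⟩, ⟨t, ht⟩⟩ := greenL_def.mp h
  obtain ⟨⟨u, hu⟩, ⟨v, hv⟩⟩ := greenL_def.mp h'
  refine greenL_def.mpr ⟨⟨s * u, ?_⟩, ⟨v * t, ?_⟩⟩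
  · rw [hs, hu, mul_assoc]
  · rw [hv, ht, mul_assoc]

private lemma green_comm {x z y : S} (hR : GreenR x z) (hL : GreenL z y) :
    ∃ w : S, GreenL x w ∧ GreenR w y := by
  obtain ⟨⟨s, hs⟩, ⟨s', hs'⟩⟩ := greenR_def.mp hR
  obtain ⟨⟨u, hu⟩, ⟨v, hv⟩⟩ := greenL_def.mp hL
  -- hs : ↑x = ↑z * s, hs' : ↑z = ↑x * s', hu : ↑z = u * ↑y, hv : ↑y = v * ↑z
  have key : ∀ w : S, (w : WithOne S) = v * (x : WithOne S) → GreenL x w ∧ GreenR w y := by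
    intro w hw
    have hWYs : (w : WithOne S) = (y : WithOne S) * s := by
      rw [hw, hs, ← mul_assoc, ← hv]
    constructor
    · refine greenL_def.mpr ⟨⟨u, ?_⟩, ⟨v, hw⟩⟩
      rw [hWYs, ← mul_assoc, ← hu, ← hs]
    · refine greenR_def.mpr ⟨⟨s, hWYs⟩, ⟨s', ?_⟩⟩
      rw [hw, mul_assoc, ← hs', ← hv]
  rcases coe_one_or v with rfl | ⟨v₀, rfl⟩
  · exact ⟨x, key x (one_mul _).symm⟩
  · exact ⟨v₀ * x, key _ (WithOne.coe_mul v₀ x)⟩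

private lemma greenD_of_RL {x z y : S} (hR : GreenR x z) (hL : GreenL z y) : GreenD x y :=
  green_comm hR hL

private lemma greenD_of_L {x y : S} (h : GreenL x y) : GreenD x y := ⟨y, h, greenR_refl y⟩
private lemma greenD_of_R {x y : S} (h : GreenR x y) : GreenD x y := ⟨x, greenL_refl x, h⟩

private lemma greenD_symm {x y : S} (h : GreenD x y) : GreenD y x := by
  obtain ⟨z, hL, hR⟩ := h
  exact greenD_of_RL (greenR_symm hR) (greenL_symm hL)

private lemma greenD_trans {x y z : S} (h : GreenD x y) (h' : GreenD y z) : GreenD x z := by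
  obtain ⟨m, hLm, hRm⟩ := h
  obtain ⟨n, hLn, hRn⟩ := h'
  obtain ⟨w, hLw, hRw⟩ := green_comm hRm hLn
  exact ⟨w, greenL_trans hLm hLw, greenR_trans hRw hRn⟩

end Aux

section PowLem
variable {M : Type*} [Monoid M] {e u p : M}

private lemma pG (hee : e * e = e) (hpe : p * e = p) (β : ℕ) : e * (p ^ β * e) = e * p ^ β := by
  induction β with
  | zero => simpa using hee
  | succ γ _ => rw [pow_succ, mul_assoc (p ^ γ) p e, hpe]

private lemma pF1 (hee : e * e = e) (heu : e * u = u) (α : ℕ) : e * (u ^ α * e) = u ^ α * e := by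
  induction α with
  | zero => simpa using hee
  | succ γ _ => rw [pow_succ', mul_assoc u, ← mul_assoc e, heu]

private lemma pEC (hee : e * e = e) (heu : e * u = u) (α : ℕ) (t : M) :
    e * (u ^ α * (e * t)) = u ^ α * (e * t) := by
  induction α with
  | zero => simp only [pow_zero, one_mul]; rw [← mul_assoc, hee]
  | succ γ _ => rw [pow_succ', mul_assoc u, ← mul_assoc e, heu]

private lemma pCE (hee : e * e = e) (hpe : p * e = p) (α β : ℕ) :
    (u ^ α * (e * p ^ β)) * e = u ^ α * (e * p ^ β) := by
  rw [mul_assoc, mul_assoc, pG hee hpe]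

private lemma pF2i (hee : e * e = e) (hpe : p * e = p) (hpu : p * u = e) (β : ℕ) :
    (e * p ^ β) * u ^ β = e := by
  induction β with
  | zero => simpa using hee
  | succ γ ih =>
      have ha : (e * p ^ (γ+1)) * u ^ (γ+1) = (e * p ^ γ) * ((p * u) * u ^ γ) := by
        rw [pow_succ, pow_succ']; simp only [mul_assoc]
      have hb : (e * p ^ γ) * (e * u ^ γ) = ((e * p ^ γ) * e) * u ^ γ :=
        (mul_assoc (e * p ^ γ) e (u ^ γ)).symm
      rw [ha, hpu, hb, mul_assoc e (p ^ γ) e, pG hee hpe, ih]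

private lemma pF4 (hee : e * e = e) (heu : e * u = u) (hpu : p * u = e) (α : ℕ) :
    p ^ α * (u ^ α * e) = e := by
  induction α with
  | zero => simpa using hee
  | succ γ ih =>
      have ha : p ^ (γ+1) * (u ^ (γ+1) * e) = p ^ γ * ((p * u) * (u ^ γ * e)) := by
        rw [pow_succ, pow_succ']; simp only [mul_assoc]
      rw [ha, hpu, pF1 hee heu, ih]

private lemma pE1 (hue : u * e = u) (α : ℕ) : u ^ (α + 1) * e = u ^ (α + 1) := by
  rw [pow_succ, mul_assoc, hue]

end PowLem

section Words
variable {S : Type*} [Semigroup S]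

private def UU (a b : S) : WithOne S := (a : WithOne S) * ((b : WithOne S) * b)
private def EE (a b : S) : WithOne S := (a : WithOne S) * b
private def PP (a b : S) : WithOne S := (a : WithOne S) * ((a : WithOne S) * b)
private def CC (a b : S) (α β : ℕ) : WithOne S := UU a b ^ α * (EE a b * PP a b ^ β)

variable {a b : S}

private lemma m1 (h1 : a * b * a = a) : (a : WithOne S) * b * a = a := by exact_mod_cast h1
private lemma m2 (h2 : b * a * b = b) : (b : WithOne S) * a * b = b := by exact_mod_cast h2
private lemma m3 (h3 : a * b = a * a * (b * b)) :
    (a : WithOne S) * a * ((b : WithOne S) * b) = (a : WithOne S) * b := by exact_mod_cast h3.symm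

private lemma rb1 (h1 : a * b * a = a) : (a : WithOne S) * ((b : WithOne S) * a) = a := by
  rw [← mul_assoc, m1 h1]
private lemma rc1 (h1 : a * b * a = a) :
    ∀ t : WithOne S, (a : WithOne S) * ((b : WithOne S) * ((a : WithOne S) * t)) = a * t :=
  fun t => by rw [← mul_assoc, ← mul_assoc, m1 h1]
private lemma rb2 (h2 : b * a * b = b) : (b : WithOne S) * ((a : WithOne S) * b) = b := by
  rw [← mul_assoc, m2 h2]
private lemma rb3 (h3 : a * b = a * a * (b * b)) :
    (a : WithOne S) * ((a : WithOne S) * ((b : WithOne S) * b)) = (a : WithOne S) * b := by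
  rw [← mul_assoc]; exact m3 h3

private lemma hEE (h2 : b * a * b = b) : EE a b * EE a b = EE a b := by
  simp only [EE]; simp only [mul_assoc]; rw [rb2 h2]
private lemma hEU (h1 : a * b * a = a) : EE a b * UU a b = UU a b := by
  simp only [EE, UU]; simp only [mul_assoc]; rw [rc1 h1]
private lemma hUE (h2 : b * a * b = b) : UU a b * EE a b = UU a b := by
  simp only [EE, UU]; simp only [mul_assoc]; rw [rb2 h2]
private lemma hPE (h2 : b * a * b = b) : PP a b * EE a b = PP a b := by
  simp only [EE, PP]; simp only [mul_assoc]; rw [rb2 h2]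
private lemma hPU (h1 : a * b * a = a) (h3 : a * b = a * a * (b * b)) :
    PP a b * UU a b = EE a b := by
  simp only [EE, PP, UU]; simp only [mul_assoc]; rw [rc1 h1, rb3 h3]
private lemma hPA (h1 : a * b * a = a) : PP a b * a = (a : WithOne S) * a := by
  simp only [PP]; simp only [mul_assoc]; rw [rb1 h1]
private lemma hPB (h3 : a * b = a * a * (b * b)) : PP a b * b = EE a b := by
  simp only [PP, EE]; simp only [mul_assoc]; rw [rb3 h3]
private lemma hEB : EE a b * b = UU a b := by
  simp only [EE, UU]; rw [mul_assoc]

-- CC-level lemmas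
private lemma cCE (h2 : b * a * b = b) (α β : ℕ) : CC a b α β * EE a b = CC a b α β := by
  simp only [CC]; exact pCE (hEE h2) (hPE h2) α β

private lemma cEC (h1 : a * b * a = a) (h2 : b * a * b = b) (α β : ℕ) :
    EE a b * CC a b α β = CC a b α β := by
  simp only [CC]; exact pEC (hEE h2) (hEU h1) α _

private lemma cR1 (α β : ℕ) : CC a b α 0 * PP a b ^ β = CC a b α β := by
  simp only [CC, pow_zero, mul_one, mul_assoc]

private lemma cR2 (h1 : a * b * a = a) (h2 : b * a * b = b) (h3 : a * b = a * a * (b * b))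
    (α β : ℕ) : CC a b α β * UU a b ^ β = CC a b α 0 := by
  simp only [CC, pow_zero, mul_one]
  rw [mul_assoc, pF2i (hEE h2) (hPE h2) (hPU h1 h3) β]

private lemma cL1 (α : ℕ) : CC a b α 0 = UU a b ^ α * EE a b := by
  simp only [CC, pow_zero, mul_one]

private lemma cL2 (h1 : a * b * a = a) (h2 : b * a * b = b) (h3 : a * b = a * a * (b * b))
    (α : ℕ) : PP a b ^ α * CC a b α 0 = EE a b := by
  simp only [CC, pow_zero, mul_one]
  exact pF4 (hEE h2) (hEU h1) (hPU h1 h3) α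

private lemma cP (α β : ℕ) : CC a b α β * PP a b = CC a b α (β + 1) := by
  simp only [CC, pow_succ]; simp only [mul_assoc]

private lemma cA2 (h1 : a * b * a = a) (α β : ℕ) :
    (CC a b α β * a) * a = CC a b α (β + 1) * a := by
  rw [mul_assoc, ← hPA h1, ← mul_assoc, cP]

private lemma cB0 (h2 : b * a * b = b) (α : ℕ) : CC a b α 0 * b = CC a b (α + 1) 0 := by
  rw [cL1, cL1, mul_assoc, hEB, ← pow_succ, pE1 (hUE h2)]

private lemma cBs (h2 : b * a * b = b) (h3 : a * b = a * a * (b * b)) (α β : ℕ) :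
    CC a b α (β + 1) * b = CC a b α β := by
  simp only [CC]
  rw [mul_assoc, mul_assoc, pow_succ, mul_assoc, hPB h3, pG (hEE h2) (hPE h2)]

private lemma cAB (h2 : b * a * b = b) (α β : ℕ) : (CC a b α β * a) * b = CC a b α β := by
  rw [mul_assoc]
  exact cCE h2 α β

end Words

section Words2
variable {S : Type*} [Semigroup S]

private def Good (a b s : S) : Prop :=
  ∃ α β : ℕ, (s : WithOne S) = CC a b α β ∨
    (s : WithOne S) = (b : WithOne S) * CC a b α β ∨
    (s : WithOne S) = CC a b α β * (a : WithOne S) ∨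
    (s : WithOne S) = (b : WithOne S) * (CC a b α β * (a : WithOne S))

variable {a b : S}

private lemma good_mul_a (h1 : a * b * a = a) {s : S} (hs : Good a b s) :
    Good a b (s * a) := by
  obtain ⟨α, β, hc | hc | hc | hc⟩ := hs
  · exact ⟨α, β, Or.inr (Or.inr (Or.inl (by rw [WithOne.coe_mul, hc])))⟩
  · refine ⟨α, β, Or.inr (Or.inr (Or.inr ?_))⟩
    rw [WithOne.coe_mul, hc, mul_assoc]
  · refine ⟨α, β + 1, Or.inr (Or.inr (Or.inl ?_))⟩
    rw [WithOne.coe_mul, hc]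
    exact cA2 h1 α β
  · refine ⟨α, β + 1, Or.inr (Or.inr (Or.inr ?_))⟩
    rw [WithOne.coe_mul, hc, mul_assoc, cA2 h1 α β]

private lemma good_mul_b (h2 : b * a * b = b) (h3 : a * b = a * a * (b * b)) {s : S}
    (hs : Good a b s) : Good a b (s * b) := by
  obtain ⟨α, β, hc | hc | hc | hc⟩ := hs
  · rcases β with _ | γ
    · exact ⟨α + 1, 0, Or.inl (by rw [WithOne.coe_mul, hc, cB0 h2])⟩
    · exact ⟨α, γ, Or.inl (by rw [WithOne.coe_mul, hc, cBs h2 h3])⟩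
  · rcases β with _ | γ
    · refine ⟨α + 1, 0, Or.inr (Or.inl ?_)⟩
      rw [WithOne.coe_mul, hc, mul_assoc, cB0 h2]
    · refine ⟨α, γ, Or.inr (Or.inl ?_)⟩
      rw [WithOne.coe_mul, hc, mul_assoc, cBs h2 h3]
  · exact ⟨α, β, Or.inl (by rw [WithOne.coe_mul, hc, cAB h2])⟩
  · refine ⟨α, β, Or.inr (Or.inl ?_)⟩
    rw [WithOne.coe_mul, hc, mul_assoc, cAB h2]

private lemma good_e (h2 : b * a * b = b) : Good a b (a * b) := by
  refine ⟨0, 0, Or.inl ?_⟩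
  simp only [CC, pow_zero, one_mul, mul_one, EE, WithOne.coe_mul]

private lemma good_f (h1 : a * b * a = a) : Good a b (b * a) := by
  refine ⟨0, 0, Or.inr (Or.inr (Or.inr ?_))⟩
  simp only [CC, pow_zero, one_mul, mul_one, EE, WithOne.coe_mul]
  rw [m1 h1]

private lemma good_all (hgen : Subsemigroup.closure ({a, b} : Set S) = ⊤)
    (h1 : a * b * a = a) (h2 : b * a * b = b) (h3 : a * b = a * a * (b * b)) :
    ∀ s : S, Good a b s := by
  have hTmul : ∀ {x y : S}, (∀ n, Good a b n → Good a b (n * x)) →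
      (∀ n, Good a b n → Good a b (n * y)) → (∀ n, Good a b n → Good a b (n * (x * y))) := by
    intro x y hx hy n hn
    rw [← mul_assoc]
    exact hy _ (hx _ hn)
  let T : Subsemigroup S :=
    { carrier := {s : S | ∀ n, Good a b n → Good a b (n * s)}
      mul_mem' := fun hx hy => hTmul hx hy }
  have hsubT : ({a, b} : Set S) ⊆ (T : Set S) := by
    rintro x hx
    rcases Set.mem_insert_iff.mp hx with rfl | hx
    · exact fun n hn => good_mul_a h1 hn
    · rw [Set.mem_singleton_iff] at hx
      subst hx
      exact fun n hn => good_mul_b h2 h3 hn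
  have hT : ∀ s : S, ∀ n, Good a b n → Good a b (n * s) := by
    intro s
    have h0 : s ∈ (⊤ : Subsemigroup S) := Subsemigroup.mem_top s
    rw [← hgen] at h0
    exact (Subsemigroup.closure_le.mpr hsubT) h0
  have hKmul : ∀ {x y : S}, (a * b * x = x ∨ b * a * x = x) → (a * b * y = y ∨ b * a * y = y) →
      (a * b * (x * y) = x * y ∨ b * a * (x * y) = x * y) := by
    intro x y hx _
    rcases hx with h | h
    · left; rw [← mul_assoc, h]
    · right; rw [← mul_assoc, h]
  let K : Subsemigroup S :=
    { carrier := {s : S | a * b * s = s ∨ b * a * s = s}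
      mul_mem' := fun hx hy => hKmul hx hy }
  have hsubK : ({a, b} : Set S) ⊆ (K : Set S) := by
    rintro x hx
    rcases Set.mem_insert_iff.mp hx with rfl | hx
    · exact Or.inl h1
    · rw [Set.mem_singleton_iff] at hx
      subst hx
      exact Or.inr h2
  have hK : ∀ s : S, a * b * s = s ∨ b * a * s = s := by
    intro s
    have h0 : s ∈ (⊤ : Subsemigroup S) := Subsemigroup.mem_top s
    rw [← hgen] at h0
    exact (Subsemigroup.closure_le.mpr hsubK) h0
  intro s
  rcases hK s with h | h
  · have := hT s (a * b) (good_e h2)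
    rwa [h] at this
  · have := hT s (b * a) (good_f h1)
    rwa [h] at this

private def wl (a b : S) : ℕ → S
  | 0 => a * b
  | n + 1 => (a * (b * b)) * wl a b n

private def word (a b : S) (α : ℕ) : ℕ → S
  | 0 => wl a b α
  | β + 1 => word a b α β * (a * (a * b))

private lemma coe_wl (α : ℕ) : ((wl a b α : S) : WithOne S) = UU a b ^ α * EE a b := by
  induction α with
  | zero => simp only [wl, pow_zero, one_mul, EE, WithOne.coe_mul]
  | succ n ih =>
      show ((a * (b * b)) * wl a b n : S) = (UU a b ^ (n + 1) * EE a b : WithOne S)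
      rw [WithOne.coe_mul, ih, ← mul_assoc,
        show ((a * (b * b) : S) : WithOne S) = UU a b from by simp only [UU, WithOne.coe_mul],
        ← pow_succ']

private lemma coe_word (α β : ℕ) : ((word a b α β : S) : WithOne S) = CC a b α β := by
  induction β with
  | zero =>
      show ((wl a b α : S) : WithOne S) = CC a b α 0
      rw [coe_wl, cL1]
  | succ γ ih =>
      show ((word a b α γ * (a * (a * b)) : S) : WithOne S) = CC a b α (γ + 1)
      rw [WithOne.coe_mul, ih,
        show ((a * (a * b) : S) : WithOne S) = PP a b from by simp only [PP, WithOne.coe_mul],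
        cP]

end Words2


section Final
variable {S : Type*} [Semigroup S] {a b : S}

private lemma cEC' (h1 : a * b * a = a) (h2 : b * a * b = b) (α β : ℕ) :
    ((a : WithOne S) * b) * CC a b α β = CC a b α β := cEC h1 h2 α β

private lemma stepRcore (h1 : a * b * a = a) (h2 : b * a * b = b)
    (h3 : a * b = a * a * (b * b)) (α β : ℕ) :
    GreenR (word a b α β) (word a b α 0) :=
  greenR_def.mpr ⟨⟨PP a b ^ β, by rw [coe_word, coe_word, cR1]⟩,
    ⟨UU a b ^ β, by rw [coe_word, coe_word, cR2 h1 h2 h3]⟩⟩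

private lemma stepLcore (h1 : a * b * a = a) (h2 : b * a * b = b)
    (h3 : a * b = a * a * (b * b)) (α : ℕ) :
    GreenL (word a b α 0) (a * b) :=
  greenL_def.mpr ⟨⟨UU a b ^ α, by
      rw [coe_word, WithOne.coe_mul, cL1]
      rfl⟩,
    ⟨PP a b ^ α, by
      rw [WithOne.coe_mul, coe_word]
      exact ((cL2 h1 h2 h3 α).trans (rfl : EE a b = (a : WithOne S) * b)).symm⟩⟩

private lemma good_D (h1 : a * b * a = a) (h2 : b * a * b = b)
    (h3 : a * b = a * a * (b * b)) {s : S} (hs : Good a b s) : GreenD s (a * b) := by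
  obtain ⟨α, β, hc | hc | hc | hc⟩ := hs
  · have hs' : s = word a b α β := WithOne.coe_inj.mp (by rw [hc, coe_word])
    rw [hs']
    exact greenD_of_RL (stepRcore h1 h2 h3 α β) (stepLcore h1 h2 h3 α)
  · have hL1 : GreenL s (word a b α β) := greenL_def.mpr
      ⟨⟨(b : WithOne S), by rw [hc, coe_word]⟩,
       ⟨(a : WithOne S), by
          rw [coe_word, hc, ← mul_assoc]
          exact (cEC' h1 h2 α β).symm⟩⟩
    exact greenD_trans (greenD_of_L hL1)
      (greenD_of_RL (stepRcore h1 h2 h3 α β) (stepLcore h1 h2 h3 α))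
  · have hR1 : GreenR s (word a b α β) := greenR_def.mpr
      ⟨⟨(a : WithOne S), by rw [hc, coe_word]⟩,
       ⟨(b : WithOne S), by
          rw [coe_word, hc]
          exact (cAB h2 α β).symm⟩⟩
    exact greenD_of_RL (greenR_trans hR1 (stepRcore h1 h2 h3 α β)) (stepLcore h1 h2 h3 α)
  · have hR1 : GreenR s (b * word a b α β) := greenR_def.mpr
      ⟨⟨(a : WithOne S), by rw [hc, WithOne.coe_mul, coe_word, mul_assoc]⟩,
       ⟨(b : WithOne S), by rw [WithOne.coe_mul, coe_word, hc, mul_assoc, cAB h2]⟩⟩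
    have hL1 : GreenL (b * word a b α β) (word a b α β) := greenL_def.mpr
      ⟨⟨(b : WithOne S), by rw [WithOne.coe_mul]⟩,
       ⟨(a : WithOne S), by
          rw [WithOne.coe_mul, coe_word, ← mul_assoc]
          exact (cEC' h1 h2 α β).symm⟩⟩
    exact greenD_trans (greenD_of_R hR1)
      (greenD_trans (greenD_of_L hL1)
        (greenD_of_RL (stepRcore h1 h2 h3 α β) (stepLcore h1 h2 h3 α)))

end Final

theorem stmt12 {S : Type*} [Semigroup S] (hO : Orthodox S) (a b : S)
    (hgen : Subsemigroup.closure ({a, b} : Set S) = ⊤)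
    (h1 : a * b * a = a) (h2 : b * a * b = b)
    (h3 : a * b = a * a * (b * b)) (h4 : b * a ≠ b * b * (a * a)) :
    ∀ x y : S, GreenD x y := by
  intro x y
  have hx : GreenD x (a * b) := good_D h1 h2 h3 (good_all hgen h1 h2 h3 x)
  have hy : GreenD y (a * b) := good_D h1 h2 h3 (good_all hgen h1 h2 h3 y)
  exact greenD_trans hx (greenD_symm hy)

end PaperStmt
end

section
/- Let S = ⟨a,b⟩ be an orthodox semigroup generated by mutually inverse elements a, b satisfying ab = a²b² and ba ≠ b²a². Then S is combinatorial: Green's H-relation on S is the identity relation. -/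
/-
On `S¹`, let `ρ` be the least congruence identifying elements with a common inverse; in an
orthodox semigroup `x ρ y` forces `x = e * y * f` with idempotents `e, f`, so `ρ` separates the
elements of each `H`-class. Modulo `ρ` the generators behave as in the bicyclic monoid: every
element becomes `bᵐ (ab) aⁿ`, and Green's relations pin down `m` and `n`, provided the idempotents
`bᵏ (ab) aᵏ` stay pairwise distinct modulo `ρ`. They do: `ρ`-related idempotents of an orthodox
semigroup satisfy `e f e = e`, and for `bⁱ aⁱ` and `bʲ aʲ` with `1 ≤ i < j` this collapses to
`ba = b²a²`.
-/

namespace PaperStmt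

section Orthodox

variable {S : Type*} [Semigroup S]

def MutualInv (x y : S) : Prop := x * y * x = x ∧ y * x * y = y

def SharesInv (x y : S) : Prop := ∃ z, MutualInv x z ∧ MutualInv y z

theorem MutualInv.mul_self {x y : S} (h : MutualInv x y) : x * y * (x * y) = x * y := by
  rw [← mul_assoc, h.1]

theorem MutualInv.mul_self' {x y : S} (h : MutualInv x y) : y * x * (y * x) = y * x := by
  rw [← mul_assoc, h.2]

theorem RegularSgp.exists_mutualInv (hS : RegularSgp S) (x : S) : ∃ y, MutualInv x y := by
  obtain ⟨y, hy⟩ := hS x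
  have hxy : x * y * (x * y) = x * y := by rw [← mul_assoc, hy]
  have hyx : y * x * (y * x) = y * x := by
    rw [show y * x * (y * x) = y * (x * y * x) by simp only [mul_assoc], hy]
  refine ⟨y * x * y, ?_, ?_⟩
  · calc x * (y * x * y) * x = x * y * (x * y) * x := by simp only [mul_assoc]
      _ = x := by rw [hxy, hy]
  · calc y * x * y * x * (y * x * y) = y * x * (y * x) * (y * x) * y := by simp only [mul_assoc]
      _ = y * x * y := by rw [hyx, hyx]

theorem MutualInv.mul (hE : IdemClosed S) {x y z w : S} (hxz : MutualInv x z)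
    (hyw : MutualInv y w) : MutualInv (x * y) (w * z) := by
  have hx : x * (z * x) = x := by rw [← mul_assoc, hxz.1]
  have hz : z * x * z = z := hxz.2
  have hy : y * w * y = y := hyw.1
  have hw : w * (y * w) = w := by rw [← mul_assoc, hyw.2]
  have hef := hE _ _ hxz.mul_self' hyw.mul_self
  have hfe := hE _ _ hyw.mul_self hxz.mul_self'
  constructor
  · calc x * y * (w * z) * (x * y) = x * (y * w) * (z * x) * y := by simp only [mul_assoc]
      _ = x * (z * x) * (y * w) * (z * x) * (y * w * y) := by rw [hx, hy]
      _ = x * (z * x * (y * w) * (z * x * (y * w))) * y := by simp only [mul_assoc]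
      _ = x * (z * x) * (y * w * y) := by rw [hef]; simp only [mul_assoc]
      _ = x * y := by rw [hx, hy]
  · calc w * z * (x * y) * (w * z) = w * (z * x) * (y * w) * z := by simp only [mul_assoc]
      _ = w * (y * w) * (z * x) * (y * w) * (z * x * z) := by rw [hw, hz]
      _ = w * (y * w * (z * x) * (y * w * (z * x))) * z := by simp only [mul_assoc]
      _ = w * (y * w) * (z * x * z) := by rw [hfe]; simp only [mul_assoc]
      _ = w * z := by rw [hw, hz]

theorem SharesInv.symm {x y : S} (h : SharesInv x y) : SharesInv y x :=
  let ⟨z, hx, hy⟩ := h; ⟨z, hy, hx⟩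

theorem SharesInv.mul_right (hO : Orthodox S) {x y : S} (h : SharesInv x y) (w : S) :
    SharesInv (x * w) (y * w) := by
  obtain ⟨z, hx, hy⟩ := h
  obtain ⟨w', hw⟩ := hO.1.exists_mutualInv w
  exact ⟨w' * z, hx.mul hO.2 hw, hy.mul hO.2 hw⟩

theorem SharesInv.mul_left (hO : Orthodox S) {x y : S} (h : SharesInv x y) (w : S) :
    SharesInv (w * x) (w * y) := by
  obtain ⟨z, hx, hy⟩ := h
  obtain ⟨w', hw⟩ := hO.1.exists_mutualInv w
  exact ⟨z * w', hw.mul hO.2 hx, hw.mul hO.2 hy⟩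

theorem SharesInv.exists_eq_idem_mul_mul {x y : S} (h : SharesInv x y) :
    ∃ e f : S, e * e = e ∧ f * f = f ∧ x = e * y * f := by
  obtain ⟨z, hx, hy⟩ := h
  refine ⟨x * z, z * x, hx.mul_self, hx.mul_self', ?_⟩
  calc x = x * (z * y * z) * x := by rw [hy.2, hx.1]
    _ = x * z * y * (z * x) := by simp only [mul_assoc]

/-- In an orthodox semigroup `SharesInv` is already transitive and is the least inverse congruence;
taking its closure spares us that proof. -/
def invCon (hO : Orthodox S) : Con S where
  r := Relation.ReflTransGen SharesInv
  iseqv :=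
    ⟨fun _ => .refl,
      fun h => Relation.ReflTransGen.mono (fun _ _ h => SharesInv.symm h) _ _
        (Relation.reflTransGen_swap.mpr h),
      fun h k => h.trans k⟩
  mul' {_ x y _} hwx hyz :=
    (hwx.lift (· * y) fun _ _ h => h.mul_right hO y).trans
      (hyz.lift (x * ·) fun _ _ h => h.mul_left hO x)

theorem invCon_iff (hO : Orthodox S) {x y : S} :
    invCon hO x y ↔ Relation.ReflTransGen SharesInv x y :=
  Iff.rfl

theorem invCon.exists_eq_idem_mul_mul (hO : Orthodox S) {x y : S} (h : invCon hO x y) :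
    ∃ e f : S, e * e = e ∧ f * f = f ∧ x = e * y * f := by
  rw [invCon_iff] at h
  induction h with
  | refl =>
    obtain ⟨z, hz⟩ := hO.1.exists_mutualInv x
    exact SharesInv.exists_eq_idem_mul_mul ⟨z, hz, hz⟩
  | tail _ hyz ih =>
    obtain ⟨e, f, he, hf, rfl⟩ := ih
    obtain ⟨e', f', he', hf', rfl⟩ := hyz.exists_eq_idem_mul_mul
    exact ⟨e * e', f' * f, hO.2 _ _ he he', hO.2 _ _ hf' hf, by simp only [mul_assoc]⟩

theorem exists_eq_mul_idem_of_eq_mul_mul (hE : IdemClosed S) {e f u v : S} (he : e * e = e)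
    (hf : f * f = f) (hv : v * v = v) (h : e = u * f * v) :
    ∃ x y, y * y = y ∧ f * y = y ∧ e = x * y := by
  refine ⟨e * u, f * v * e, hE _ _ (hE _ _ hf hv) he, by simp only [← mul_assoc, hf], ?_⟩
  calc e = e * (u * f * v) * e := by rw [← h, he, he]
    _ = e * u * (f * v * e) := by simp only [mul_assoc]

theorem mul_mul_self_of_eq_mul_mul (hE : IdemClosed S) {e f u v p q : S} (he : e * e = e)
    (hf : f * f = f) (hv : v * v = v) (hq : q * q = q) (hef : e = u * f * v)
    (hfe : f = p * e * q) : e * f * e = e := by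
  obtain ⟨x, y, hy, hfy, hexy⟩ := exists_eq_mul_idem_of_eq_mul_mul hE he hf hv hef
  obtain ⟨x', y', hy', hey', hfxy⟩ := exists_eq_mul_idem_of_eq_mul_mul hE hf he hq hfe
  have eq_of_idem {g z w : S} (hw : w * w = w) (hg : g = z * w) (hgw : g * w = w) : w = g := by
    rw [← hgw, hg, mul_assoc, hw]
  have hyy' : y' * y = e := eq_of_idem (z := x * x') (hE _ _ hy' hy)
    (by rw [mul_assoc, ← mul_assoc x', ← hfxy, hfy, hexy]) (by rw [← mul_assoc, hey'])
  have hy'y : y * y' = f := eq_of_idem (z := x' * x) (hE _ _ hy hy')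
    (by rw [mul_assoc, ← mul_assoc x, ← hexy, hey', hfxy]) (by rw [← mul_assoc, hfy])
  calc e * f * e = y' * y * (y * y') * (y' * y) := by rw [hyy', hy'y]
    _ = y' * (y * y) * (y' * y') * y := by simp only [mul_assoc]
    _ = e * e := by rw [hy, hy', mul_assoc, hyy']
    _ = e := he

theorem invCon.mul_mul_self (hO : Orthodox S) {e f : S} (he : e * e = e) (hf : f * f = f)
    (h : invCon hO e f) : e * f * e = e := by
  obtain ⟨_, v, -, hv, hef⟩ := invCon.exists_eq_idem_mul_mul hO h
  obtain ⟨_, q, -, hq, hfe⟩ := invCon.exists_eq_idem_mul_mul hO ((invCon hO).symm h)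
  exact mul_mul_self_of_eq_mul_mul hO.2 he hf hv hq hef hfe

theorem eq_of_invCon_of_greenRM_of_greenLM {M : Type*} [Monoid M] (hO : Orthodox M) {x y : M}
    (h : invCon hO x y) (hR : GreenRM x y) (hL : GreenLM x y) : x = y := by
  obtain ⟨e, f, he, hf, hx⟩ := invCon.exists_eq_idem_mul_mul hO h
  obtain ⟨t, ht⟩ := hR.2
  obtain ⟨t', ht'⟩ := hL.2
  have hex : e * x = x := by rw [hx, ← mul_assoc, ← mul_assoc, he]
  have hxf : x * f = x := by rw [hx, mul_assoc, hf]
  have hey : e * y = y := by rw [ht, ← mul_assoc, hex]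
  have hyf : y * f = y := by rw [ht', mul_assoc, hxf]
  rw [hx, hey, hyf]

theorem Orthodox.withOne (hO : Orthodox S) : Orthodox (WithOne S) := by
  constructor
  · refine fun x => WithOne.cases_on x ⟨1, by simp⟩ fun x => ?_
    obtain ⟨y, hy⟩ := hO.1 x
    exact ⟨y, by rw [← WithOne.coe_mul, ← WithOne.coe_mul, hy]⟩
  · refine fun e f =>
      WithOne.cases_on e (by simp) fun e => WithOne.cases_on f (by simp) fun f => ?_
    simp only [← WithOne.coe_mul, WithOne.coe_inj]
    exact hO.2 e f

end Orthodox

theorem GreenRM.map {M N : Type*} [Monoid M] [Monoid N] (φ : M →* N) {x y : M}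
    (h : GreenRM x y) : GreenRM (φ x) (φ y) := by
  obtain ⟨⟨s, hs⟩, ⟨t, ht⟩⟩ := h
  exact ⟨⟨φ s, by rw [hs, map_mul]⟩, ⟨φ t, by rw [ht, map_mul]⟩⟩

theorem GreenLM.map {M N : Type*} [Monoid M] [Monoid N] (φ : M →* N) {x y : M}
    (h : GreenLM x y) : GreenLM (φ x) (φ y) := by
  obtain ⟨⟨s, hs⟩, ⟨t, ht⟩⟩ := h
  exact ⟨⟨φ s, by rw [hs, map_mul]⟩, ⟨φ t, by rw [ht, map_mul]⟩⟩

section Bicyclic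

variable {N : Type*} [Monoid N]

/-- In the bicyclic monoid `⟨p, q | p * q = 1⟩`, with `A = p` and `B = q`, this is
`q ^ m * p ^ n`. -/
def biword (A B : N) (m n : ℕ) : N := B ^ m * (A * B) * A ^ n

theorem map_biword {N' : Type*} [Monoid N'] (φ : N →* N') (A B : N) (m n : ℕ) :
    φ (biword A B m n) = biword (φ A) (φ B) m n := by
  simp only [biword, map_mul, map_pow]

theorem mul_biword_self_mul (A B : N) (k : ℕ) :
    B * biword A B k k * A = biword A B (k + 1) (k + 1) := by
  simp only [biword, pow_succ' B, pow_succ A, mul_assoc]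

/-- The relations of the bicyclic monoid, with its identity replaced by the idempotent `A * B`. -/
structure IsBicyclicPair (A B : N) : Prop where
  aba : A * B * A = A
  bab : B * A * B = B
  aab : A * (A * B) = A
  abb : A * B * B = B

namespace IsBicyclicPair

variable {A B : N} (h : IsBicyclicPair A B)
include h

theorem mul_self : A * B * (A * B) = A * B := by rw [← mul_assoc, h.aba]

theorem commute_left : Commute (A * B) A := h.aba.trans h.aab.symm

theorem commute_right : Commute (A * B) B := h.abb.trans (by rw [← mul_assoc, h.bab])

theorem biword_zero_one : biword A B 0 1 = A := by simp [biword, h.aba]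

theorem biword_one_zero : biword A B 1 0 = B := by simp [biword, ← mul_assoc, h.bab]

theorem biword_mul_biword_zero_left (m p q : ℕ) :
    biword A B m 0 * biword A B p q = biword A B (m + p) q := by
  calc biword A B m 0 * biword A B p q = B ^ m * (A * B * B ^ p) * (A * B) * A ^ q := by
        simp only [biword, pow_zero, mul_one, mul_assoc]
    _ = B ^ (m + p) * (A * B * (A * B)) * A ^ q := by
        rw [(h.commute_right.pow_right p).eq, pow_add]; simp only [mul_assoc]
    _ = biword A B (m + p) q := by rw [h.mul_self, biword]

theorem biword_mul_biword_zero_right (m n q : ℕ) :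
    biword A B m n * biword A B 0 q = biword A B m (n + q) := by
  calc biword A B m n * biword A B 0 q = B ^ m * (A * B) * (A ^ n * (A * B)) * A ^ q := by
        simp only [biword, pow_zero, one_mul, mul_assoc]
    _ = B ^ m * (A * B * (A * B)) * A ^ (n + q) := by
        rw [← (h.commute_left.pow_right n).eq, pow_add]; simp only [mul_assoc]
    _ = biword A B m (n + q) := by rw [h.mul_self, biword]

theorem biword_succ_mul_biword_succ (m n p q : ℕ) :
    biword A B m (n + 1) * biword A B (p + 1) q = biword A B m n * biword A B p q := by
  calc biword A B m (n + 1) * biword A B (p + 1) q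
        = B ^ m * (A * B) * (A ^ n * (A * B)) * (B ^ p * (A * B) * A ^ q) := by
        simp only [biword, pow_succ A n, pow_succ' B p, mul_assoc]
    _ = B ^ m * (A * B * (A * B)) * A ^ n * (B ^ p * (A * B) * A ^ q) := by
        rw [← (h.commute_left.pow_right n).eq]; simp only [mul_assoc]
    _ = biword A B m n * biword A B p q := by rw [h.mul_self, biword, biword]

theorem biword_mul_biword (m n p q : ℕ) :
    biword A B m n * biword A B p q = biword A B (m + (p - n)) (n - p + q) := by
  induction n generalizing p with
  | zero => simpa using h.biword_mul_biword_zero_left m p q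
  | succ n ih =>
    cases p with
    | zero => simpa using h.biword_mul_biword_zero_right m (n + 1) q
    | succ p => simpa [h.biword_succ_mul_biword_succ] using ih p

variable (hinj : Function.Injective fun k => biword A B k k)
include hinj

theorem le_of_biword_mul_eq {m n p : ℕ}
    (hp : biword A B p p * biword A B m n = biword A B m n) : p ≤ m := by
  by_contra! hmp
  have hpp : biword A B p p = biword A B m m := by
    have := congrArg (· * biword A B n m) hp
    simp only [h.biword_mul_biword] at this
    convert this using 2 <;> omega
  exact hmp.ne' (hinj hpp)

theorem le_of_mul_biword_eq {m n q : ℕ}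
    (hq : biword A B m n * biword A B q q = biword A B m n) : q ≤ n := by
  by_contra! hnq
  have hqq : biword A B q q = biword A B n n := by
    have := congrArg (biword A B n m * ·) hq
    simp only [h.biword_mul_biword] at this
    convert this using 2 <;> omega
  exact hnq.ne' (hinj hqq)

theorem eq_of_greenRM {m n p q : ℕ} (hR : GreenRM (biword A B m n) (biword A B p q)) : m = p := by
  have key {m n p q : ℕ} (s : N) (hs : biword A B m n = biword A B p q * s) : p ≤ m :=
    h.le_of_biword_mul_eq hinj (by
      rw [hs, ← mul_assoc, h.biword_mul_biword]; simp)
  obtain ⟨⟨s, hs⟩, ⟨t, ht⟩⟩ := hR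
  exact le_antisymm (key t ht) (key s hs)

theorem eq_of_greenLM {m n p q : ℕ} (hL : GreenLM (biword A B m n) (biword A B p q)) : n = q := by
  have key {m n p q : ℕ} (s : N) (hs : biword A B m n = s * biword A B p q) : q ≤ n :=
    h.le_of_mul_biword_eq hinj (by
      rw [hs, mul_assoc, h.biword_mul_biword]; simp)
  obtain ⟨⟨s, hs⟩, ⟨t, ht⟩⟩ := hL
  exact le_antisymm (key t ht) (key s hs)

end IsBicyclicPair

theorem IsBicyclicPair.exists_biword {S : Type*} [Semigroup S] {a b : S}
    (hgen : Subsemigroup.closure ({a, b} : Set S) = ⊤) (f : S →ₙ* N)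
    (h : IsBicyclicPair (f a) (f b)) (s : S) : ∃ m n, f s = biword (f a) (f b) m n := by
  have hs : s ∈ Subsemigroup.closure ({a, b} : Set S) := hgen ▸ Subsemigroup.mem_top s
  induction hs using Subsemigroup.closure_induction with
  | mem x hx =>
    rcases hx with rfl | rfl
    · exact ⟨0, 1, h.biword_zero_one.symm⟩
    · exact ⟨1, 0, h.biword_one_zero.symm⟩
  | mul x y _ _ hx hy =>
    obtain ⟨m, n, hx⟩ := hx
    obtain ⟨p, q, hy⟩ := hy
    exact ⟨_, _, by rw [map_mul, hx, hy, h.biword_mul_biword]⟩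

end Bicyclic

section Generators

variable {M : Type*} [Monoid M] {A B : M}

theorem pow_succ_mul_pow_succ (h3 : A * B = A * A * (B * B)) (k : ℕ) :
    A ^ (k + 1) * B ^ (k + 1) = A * B := by
  induction k with
  | zero => simp
  | succ k ih =>
    calc A ^ (k + 1 + 1) * B ^ (k + 1 + 1) = A * (A ^ (k + 1) * B ^ (k + 1)) * B := by
          rw [pow_succ' A, pow_succ B]; simp only [mul_assoc]
      _ = A * A * (B * B) := by rw [ih]; simp only [mul_assoc]
      _ = A * B := h3.symm

theorem pow_succ_mul_mul (h2 : B * A * B = B) (k : ℕ) : B ^ (k + 1) * (A * B) = B ^ (k + 1) := by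
  rw [pow_succ, mul_assoc, ← mul_assoc B, h2]

theorem mul_mul_pow_succ (h1 : A * B * A = A) (k : ℕ) : A * B * A ^ (k + 1) = A ^ (k + 1) := by
  rw [pow_succ', ← mul_assoc, h1]

theorem biword_succ_self (h2 : B * A * B = B) (k : ℕ) :
    biword A B (k + 1) (k + 1) = B ^ (k + 1) * A ^ (k + 1) := by
  rw [biword, pow_succ_mul_mul h2]

theorem pow_mul_pow_mul_pow_mul_pow (h1 : A * B * A = A) (h2 : B * A * B = B)
    (h3 : A * B = A * A * (B * B)) {i j : ℕ} (hi : 1 ≤ i) (hij : i ≤ j) :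
    B ^ i * A ^ i * (B ^ j * A ^ j) = B ^ j * A ^ j ∧
      B ^ j * A ^ j * (B ^ i * A ^ i) = B ^ j * A ^ j := by
  obtain ⟨k, rfl⟩ : ∃ k, i = k + 1 := ⟨i - 1, by omega⟩
  obtain ⟨d, rfl⟩ : ∃ d, j = k + 1 + d := ⟨j - (k + 1), by omega⟩
  constructor
  · calc B ^ (k + 1) * A ^ (k + 1) * (B ^ (k + 1 + d) * A ^ (k + 1 + d))
        = B ^ (k + 1) * (A ^ (k + 1) * B ^ (k + 1)) * B ^ d * A ^ (k + 1 + d) := by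
          rw [pow_add B (k + 1) d]; simp only [mul_assoc]
      _ = B ^ (k + 1 + d) * A ^ (k + 1 + d) := by
          rw [pow_succ_mul_pow_succ h3, pow_succ_mul_mul h2, pow_add B (k + 1) d]
  · calc B ^ (k + 1 + d) * A ^ (k + 1 + d) * (B ^ (k + 1) * A ^ (k + 1))
        = B ^ (k + 1 + d) * A ^ d * (A ^ (k + 1) * B ^ (k + 1) * A ^ (k + 1)) := by
          rw [pow_add A (k + 1) d, pow_mul_comm]; simp only [mul_assoc]
      _ = B ^ (k + 1 + d) * A ^ (k + 1 + d) := by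
          rw [pow_succ_mul_pow_succ h3, mul_mul_pow_succ h1, mul_assoc, ← pow_add, add_comm d]

theorem pow_mul_pow_conj (h3 : A * B = A * A * (B * B)) (k d : ℕ) :
    A ^ (k + 1) * (B ^ (k + 1 + d) * A ^ (k + 1 + d)) * B ^ (k + 1) =
      A * B * (B ^ d * A ^ d) * (A * B) := by
  calc A ^ (k + 1) * (B ^ (k + 1 + d) * A ^ (k + 1 + d)) * B ^ (k + 1)
      = A ^ (k + 1) * B ^ (k + 1) * (B ^ d * A ^ d) * (A ^ (k + 1) * B ^ (k + 1)) := by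
        rw [pow_add B (k + 1) d, pow_add A (k + 1) d, pow_mul_comm (a := A)]
        simp only [mul_assoc]
    _ = A * B * (B ^ d * A ^ d) * (A * B) := by rw [pow_succ_mul_pow_succ h3]

theorem pow_mul_pow_mul_ne (h1 : A * B * A = A) (h2 : B * A * B = B)
    (h3 : A * B = A * A * (B * B)) (h4 : B * A ≠ B * B * (A * A)) {i j : ℕ} (hi : 1 ≤ i)
    (hij : i < j) : B ^ i * A ^ i * (B ^ j * A ^ j) * (B ^ i * A ^ i) ≠ B ^ i * A ^ i := by
  intro h
  have chain {i j : ℕ} (hi : 1 ≤ i) (hij : i ≤ j) :=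
    pow_mul_pow_mul_pow_mul_pow h1 h2 h3 hi hij
  rw [(chain hi hij.le).1, (chain hi hij.le).2] at h
  have hsucc : B ^ (i + 1) * A ^ (i + 1) = B ^ i * A ^ i := by
    rw [← (chain hi (Nat.le_succ i)).1, ← h, (chain (by omega) hij).2]
  obtain ⟨k, rfl⟩ : ∃ k, i = k + 1 := ⟨i - 1, by omega⟩
  have hu : A * B = A * B * (B * A) * (A * B) := by
    have h0 := pow_mul_pow_conj h3 k 0
    simp only [add_zero, pow_zero, mul_one] at h0
    calc A * B = A * B * (A * B) := by rw [← mul_assoc, h1]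
      _ = A ^ (k + 1) * (B ^ (k + 1 + 1) * A ^ (k + 1 + 1)) * B ^ (k + 1) := by rw [hsucc, h0]
      _ = A * B * (B * A) * (A * B) := by simpa using pow_mul_pow_conj h3 k 1
  apply h4
  calc B * A = B * (A * B) * A := by rw [← mul_assoc, h2]
    _ = B * (A * B * (B * A) * (A * B)) * A := by rw [← hu]
    _ = B * A * B * B * A * (A * B * A) := by simp only [mul_assoc]
    _ = B * B * (A * A) := by rw [h2, h1, mul_assoc]

variable (hM : Orthodox M)

/-- `A * (A * B)` and `A` share the inverse `B`; `A * B * B` and `B` share the inverse `A`. -/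
theorem isBicyclicPair_mk' (h1 : A * B * A = A) (h2 : B * A * B = B)
    (h3 : A * B = A * A * (B * B)) :
    IsBicyclicPair ((invCon hM).mk' A) ((invCon hM).mk' B) := by
  have hA : A * (A * B) * B = A * B := by simpa only [mul_assoc] using h3.symm
  have hB : A * (A * B * B) = A * B := by simpa only [mul_assoc] using h3.symm
  have sA : SharesInv (A * (A * B)) A := ⟨B,
    ⟨by rw [hA, ← mul_assoc, h1], by rw [mul_assoc B, hA, ← mul_assoc, h2]⟩, h1, h2⟩
  have sB : SharesInv (A * B * B) B := ⟨A,
    ⟨by rw [mul_assoc _ A, hB, mul_assoc, ← mul_assoc B, h2],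
      by rw [hB, h1]⟩, h2, h1⟩
  refine ⟨?_, ?_, ?_, ?_⟩ <;> simp only [← map_mul]
  · rw [h1]
  · rw [h2]
  · exact (invCon hM).eq.mpr (.single sA)
  · exact (invCon hM).eq.mpr (.single sB)

theorem biword_self_injective_mk' (h1 : A * B * A = A) (h2 : B * A * B = B)
    (h3 : A * B = A * A * (B * B)) (h4 : B * A ≠ B * B * (A * A)) :
    Function.Injective fun k => biword ((invCon hM).mk' A) ((invCon hM).mk' B) k k := by
  intro i j (hij : biword _ _ i i = biword _ _ j j)
  have hmk (k : ℕ) : (invCon hM).mk' (B ^ (k + 1) * A ^ (k + 1)) =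
      (invCon hM).mk' B * biword ((invCon hM).mk' A) ((invCon hM).mk' B) k k *
        (invCon hM).mk' A := by
    rw [mul_biword_self_mul, ← map_biword, biword_succ_self h2]
  have hρ : invCon hM (B ^ (i + 1) * A ^ (i + 1)) (B ^ (j + 1) * A ^ (j + 1)) :=
    (invCon hM).eq.mp (by simpa only [Con.coe_mk'] using (hmk i).trans (hij ▸ hmk j).symm)
  have hidem (k : ℕ) := (pow_mul_pow_mul_pow_mul_pow h1 h2 h3 (Nat.le_add_left 1 k) le_rfl).1
  rcases lt_trichotomy i j with hlt | heq | hgt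
  · exact absurd (invCon.mul_mul_self hM (hidem i) (hidem j) hρ)
      (pow_mul_pow_mul_ne h1 h2 h3 h4 (by omega) (by omega))
  · exact heq
  · exact absurd (invCon.mul_mul_self hM (hidem j) (hidem i) ((invCon hM).symm hρ))
      (pow_mul_pow_mul_ne h1 h2 h3 h4 (by omega) (by omega))

end Generators

theorem stmt13 {S : Type*} [Semigroup S] (hO : Orthodox S) (a b : S)
    (hgen : Subsemigroup.closure ({a, b} : Set S) = ⊤)
    (h1 : a * b * a = a) (h2 : b * a * b = b)
    (h3 : a * b = a * a * (b * b)) (h4 : b * a ≠ b * b * (a * a)) :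
    ∀ x y : S, GreenH x y → x = y := by
  intro x y hxy
  have hM := hO.withOne
  set φ := (invCon hM).mk'
  have h1' : (a : WithOne S) * b * a = a := by exact_mod_cast h1
  have h2' : (b : WithOne S) * a * b = b := by exact_mod_cast h2
  have h3' : (a : WithOne S) * b = a * a * (b * b) := by exact_mod_cast h3
  have h4' : (b : WithOne S) * a ≠ b * b * (a * a) := by exact_mod_cast h4
  have hpair := isBicyclicPair_mk' hM h1' h2' h3'
  have hinj := biword_self_injective_mk' hM h1' h2' h3' h4'
  set f := φ.toMulHom.comp WithOne.coeMulHom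
  obtain ⟨m, n, hx⟩ : ∃ m n, φ x = biword (φ a) (φ b) m n := hpair.exists_biword hgen f x
  obtain ⟨p, q, hy⟩ : ∃ m n, φ y = biword (φ a) (φ b) m n := hpair.exists_biword hgen f y
  have hφ : φ x = φ y := by
    have hR := GreenRM.map φ hxy.1
    have hL := GreenLM.map φ hxy.2
    rw [hx, hy] at hR hL ⊢
    rw [hpair.eq_of_greenRM hinj hR, hpair.eq_of_greenLM hinj hL]
  exact WithOne.coe_injective
    (eq_of_invCon_of_greenRM_of_greenLM hM ((invCon hM).eq.mp hφ) hxy.1 hxy.2)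

end PaperStmt
end

section
/- Let S = ⟨a,b⟩ be an orthodox semigroup generated by mutually inverse elements a, b with ab = a²b² and ba ≠ b²a². Then the maximum inverse semigroup homomorphic image S/𝒴 (where 𝒴 identifies elements with the same set of inverses) is isomorphic to the bicyclic semigroup, with the image of ab as its identity. -/
/-!
In an orthodox semigroup the idempotents form a band, so `V(y)V(x) ⊆ V(xy)`, and two elements
with a common inverse have the same set of inverses; hence `V(x) = V(y)` is a congruence `𝒴`.
In `S/𝒴` the class of `ab` is an identity for the classes `p` of `a` and `q` of `b`
(`a·ab` and `a` share the inverse `b`, `ab·b` and `b` share the inverse `a`), hence for all of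
`S/𝒴`, which is therefore a monoid generated by `p` and `q` with `pq = 1`. By a lemma of
Clifford and Preston the map `(m, n) ↦ qᵐpⁿ` from the bicyclic monoid is then an isomorphism
as soon as `qp ≠ 1`; and `qp = 1` would give `[ba] = [b²a²]`, which is impossible: the
idempotent `ba` is its own inverse, but `ba·b²a²·ba = b²a² ≠ ba`.
-/

namespace PaperStmt

/-- The set of inverses of an element. -/
def VSet {S : Type*} [Semigroup S] (x : S) : Set S := {y | x * y * x = x ∧ y * x * y = y}

/-- A concrete model of the bicyclic monoid ⟨p,q | pq = 1⟩: pairs (m,n) stand for qᵐpⁿ. -/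
@[ext] structure Bicyclic where
  m : ℕ
  n : ℕ

instance : Mul Bicyclic := ⟨fun x y => ⟨x.m + (y.m - x.n), y.n + (x.n - y.m)⟩⟩
instance : One Bicyclic := ⟨⟨0, 0⟩⟩

theorem Bicyclic.one_def : (1 : Bicyclic) = ⟨0, 0⟩ := rfl

theorem Bicyclic.mul_def (x y : Bicyclic) :
    x * y = ⟨x.m + (y.m - x.n), y.n + (x.n - y.m)⟩ := rfl

instance : Monoid Bicyclic where
  mul_assoc := by
    rintro ⟨a, b⟩ ⟨c, d⟩ ⟨e, f⟩
    simp only [Bicyclic.mul_def, Bicyclic.mk.injEq]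
    omega
  one_mul := by
    rintro ⟨a, b⟩
    simp only [Bicyclic.one_def, Bicyclic.mul_def, Bicyclic.mk.injEq]
    omega
  mul_one := by
    rintro ⟨a, b⟩
    simp only [Bicyclic.one_def, Bicyclic.mul_def, Bicyclic.mk.injEq]
    omega

theorem pow_mul_pow_of_mul_eq_one {M : Type*} [Monoid M] {p q : M} (h : p * q = 1) (n k : ℕ) :
    p ^ n * q ^ k = q ^ (k - n) * p ^ (n - k) := by
  rcases le_total n k with hnk | hkn
  · obtain ⟨j, rfl⟩ := Nat.exists_eq_add_of_le hnk
    rw [pow_add q, ← mul_assoc, pow_mul_pow_eq_one n h]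
    simp
  · obtain ⟨j, rfl⟩ := Nat.exists_eq_add_of_le' hkn
    rw [pow_add p, mul_assoc, pow_mul_pow_eq_one k h]
    simp

namespace Bicyclic

section Lift

variable {M : Type*} [Monoid M]

def lift (p q : M) (h : p * q = 1) : Bicyclic →* M where
  toFun z := q ^ z.m * p ^ z.n
  map_one' := by simp [one_def]
  map_mul' := fun ⟨m, n⟩ ⟨k, l⟩ => by
    show q ^ (m + (k - n)) * p ^ (l + (n - k)) = q ^ m * p ^ n * (q ^ k * p ^ l)
    rw [show q ^ m * p ^ n * (q ^ k * p ^ l) = q ^ m * (p ^ n * q ^ k) * p ^ l by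
        simp only [mul_assoc],
      pow_mul_pow_of_mul_eq_one h, add_comm l, pow_add, pow_add]
    simp only [mul_assoc]

variable {p q : M}

theorem lift_apply (h : p * q = 1) (z : Bicyclic) : lift p q h z = q ^ z.m * p ^ z.n := rfl

theorem lift_eq_one_iff (h : p * q = 1) (hqp : q * p ≠ 1) {z : Bicyclic} :
    lift p q h z = 1 ↔ z = 1 := by
  refine ⟨fun hz => ?_, fun hz => hz ▸ map_one _⟩
  obtain ⟨A, B⟩ := z
  rw [lift_apply] at hz
  have hA : A = 0 := by
    by_contra hA
    obtain ⟨A, rfl⟩ := Nat.exists_eq_succ_of_ne_zero hA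
    have hq : q * (q ^ A * p ^ B) = 1 := by rwa [← mul_assoc, ← pow_succ']
    rw [← left_inv_eq_right_inv h hq] at hq
    exact hqp hq
  have hB : B = 0 := by
    by_contra hB
    obtain ⟨B, rfl⟩ := Nat.exists_eq_succ_of_ne_zero hB
    have hp : q ^ A * p ^ B * p = 1 := by rwa [mul_assoc, ← pow_succ]
    rw [left_inv_eq_right_inv hp h] at hp
    exact hqp hp
  rw [hA, hB, one_def]

theorem sandwich_eq_one_of_lift_eq (h : p * q = 1) (hqp : q * p ≠ 1) {u v : Bicyclic}
    (huv : lift p q h u = lift p q h v) : ⟨0, u.m⟩ * v * ⟨u.n, 0⟩ = (1 : Bicyclic) := by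
  rw [← lift_eq_one_iff h hqp, map_mul, map_mul, ← huv, ← map_mul, ← map_mul,
    lift_eq_one_iff h hqp]
  ext <;> simp [mul_def, one_def]

theorem lift_injective (h : p * q = 1) (hqp : q * p ≠ 1) : Function.Injective (lift p q h) := by
  rintro ⟨m, n⟩ ⟨k, l⟩ huv
  have h₁ := sandwich_eq_one_of_lift_eq h hqp huv
  have h₂ := sandwich_eq_one_of_lift_eq h hqp huv.symm
  simp only [mul_def, one_def, Bicyclic.mk.injEq] at h₁ h₂
  ext <;> dsimp only <;> omega

end Lift

end Bicyclic

section Orthodox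

variable {S : Type*} [Semigroup S]

theorem isIdempotentElem_mul_of_mem_VSet {x x' : S} (h : x' ∈ VSet x) :
    IsIdempotentElem (x' * x) := by
  rw [IsIdempotentElem, ← mul_assoc, h.2]

theorem isIdempotentElem_mul_of_mem_VSet' {x x' : S} (h : x' ∈ VSet x) :
    IsIdempotentElem (x * x') := by
  rw [IsIdempotentElem, ← mul_assoc, h.1]

theorem IsIdempotentElem.mem_VSet_self {e : S} (he : IsIdempotentElem e) : e ∈ VSet e := by
  constructor <;> rw [he.eq, he.eq]

theorem RegularSgp.VSet_nonempty (hR : RegularSgp S) (x : S) : (VSet x).Nonempty := by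
  obtain ⟨y, hy⟩ := hR x
  refine ⟨y * x * y, ?_, ?_⟩
  · calc x * (y * x * y) * x = x * y * x * y * x := by simp only [mul_assoc]
      _ = x := by rw [hy, hy]
  · calc y * x * y * x * (y * x * y) = y * (x * y * x) * (y * x * y) := by simp only [mul_assoc]
      _ = y * x * (y * x * y) := by rw [hy]
      _ = y * (x * y * x) * y := by simp only [mul_assoc]
      _ = y * x * y := by rw [hy]

theorem IdemClosed.mul_mul_mul_eq_of_isIdempotentElem (hE : IdemClosed S) {u v e f : S}
    (he : IsIdempotentElem e) (hf : IsIdempotentElem f) (hu : u * e = u) (hv : f * v = v) :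
    u * f * e * v = u * v :=
  calc u * f * e * v = u * e * f * e * (f * v) := by rw [hu, hv]
    _ = u * ((e * f) * (e * f)) * v := by simp only [mul_assoc]
    _ = u * e * (f * v) := by rw [hE e f he hf]; simp only [mul_assoc]
    _ = u * v := by rw [hu, hv]

theorem IdemClosed.mul_mem_VSet_mul (hE : IdemClosed S) {x y x' y' : S}
    (hx : x' ∈ VSet x) (hy : y' ∈ VSet y) : y' * x' ∈ VSet (x * y) := by
  have hx₁ : x * (x' * x) = x := by rw [← mul_assoc, hx.1]
  have hx₂ : x' * x * x' = x' := hx.2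
  have hy₁ : y * y' * y = y := hy.1
  have hy₂ : y' * (y * y') = y' := by rw [← mul_assoc, hy.2]
  constructor
  · calc x * y * (y' * x') * (x * y) = x * (y * y') * (x' * x) * y := by simp only [mul_assoc]
      _ = x * y := hE.mul_mul_mul_eq_of_isIdempotentElem (isIdempotentElem_mul_of_mem_VSet hx)
          (isIdempotentElem_mul_of_mem_VSet' hy) hx₁ hy₁
  · calc y' * x' * (x * y) * (y' * x') = y' * (x' * x) * (y * y') * x' := by
          simp only [mul_assoc]
      _ = y' * x' := hE.mul_mul_mul_eq_of_isIdempotentElem (isIdempotentElem_mul_of_mem_VSet' hy)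
          (isIdempotentElem_mul_of_mem_VSet hx) hy₂ hx₂

section CommonInverse

variable {s t c d : S}

theorem IdemClosed.mul_mul_mul_eq_of_mem_VSet (hE : IdemClosed S) (hs : c ∈ VSet s)
    (ht : c ∈ VSet t) (hd : d ∈ VSet s) : c * s * d * t = c * t := by
  have hdt : c * s * (d * t) * (c * s) = c * s := (hE.mul_mem_VSet_mul ⟨ht.2, ht.1⟩ hd).1
  calc c * s * d * t = c * s * d * (t * (c * s * c) * t) := by rw [hs.2, ht.1]
    _ = c * s * (d * t) * (c * s) * c * t := by simp only [mul_assoc]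
    _ = c * t := by rw [hdt, hs.2]

theorem IdemClosed.mul_mul_mul_eq_of_mem_VSet' (hE : IdemClosed S) (hs : c ∈ VSet s)
    (ht : c ∈ VSet t) (hd : d ∈ VSet s) : t * d * s * c = t * c := by
  have htd : s * c * (t * d) * (s * c) = s * c := (hE.mul_mem_VSet_mul hd ⟨ht.2, ht.1⟩).1
  calc t * d * s * c = t * (c * s * c) * t * d * s * c := by rw [hs.2, ht.1]
    _ = t * c * (s * c * (t * d) * (s * c)) := by simp only [mul_assoc]
    _ = t * (c * s * c) := by rw [htd]; simp only [mul_assoc]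
    _ = t * c := by rw [hs.2]

theorem IdemClosed.mem_VSet_of_mem_VSet (hE : IdemClosed S) (hs : c ∈ VSet s)
    (ht : c ∈ VSet t) (hd : d ∈ VSet s) : d ∈ VSet t := by
  have hcsdt := hE.mul_mul_mul_eq_of_mem_VSet hs ht hd
  have htdsc := hE.mul_mul_mul_eq_of_mem_VSet' hs ht hd
  have htd : t * d = t * c * s * d :=
    calc t * d = t * (d * (s * c * s) * d) := by rw [hs.1, hd.2]
      _ = t * d * s * c * (s * d) := by simp only [mul_assoc]
      _ = t * c * s * d := by rw [htdsc]; simp only [mul_assoc]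
  have hdt : d * t = d * s * c * t :=
    calc d * t = d * (s * c * s) * d * t := by rw [hs.1, hd.2]
      _ = d * s * (c * s * d * t) := by simp only [mul_assoc]
      _ = d * s * c * t := by rw [hcsdt]; simp only [mul_assoc]
  constructor
  · calc t * d * t = t * (c * s * d * t) := by rw [htd]; simp only [mul_assoc]
      _ = t := by rw [hcsdt, ← mul_assoc, ht.1]
  · calc d * t * d = d * s * c * (t * d) := by rw [hdt]; simp only [mul_assoc]
      _ = d * s * (c * t * c) * s * d := by rw [htd]; simp only [mul_assoc]
      _ = d * (s * c * s) * d := by rw [ht.2]; simp only [mul_assoc]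
      _ = d := by rw [hs.1, hd.2]

end CommonInverse

theorem IdemClosed.VSet_eq_of_mem_VSet (hE : IdemClosed S) {s t c : S} (hs : c ∈ VSet s)
    (ht : c ∈ VSet t) : VSet s = VSet t :=
  Set.ext fun _ => ⟨hE.mem_VSet_of_mem_VSet hs ht, hE.mem_VSet_of_mem_VSet ht hs⟩

/-- The congruence `𝒴`. -/
def Orthodox.sameInversesCon (hO : Orthodox S) : Con S where
  r x y := VSet x = VSet y
  iseqv := ⟨fun _ => rfl, Eq.symm, Eq.trans⟩
  mul' {x y z w} hxy hzw := by
    obtain ⟨x', hx'⟩ := hO.1.VSet_nonempty x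
    obtain ⟨z', hz'⟩ := hO.1.VSet_nonempty z
    exact hO.2.VSet_eq_of_mem_VSet (hO.2.mul_mem_VSet_mul hx' hz')
      (hO.2.mul_mem_VSet_mul (hxy ▸ hx') (hzw ▸ hz'))

theorem Orthodox.coe_eq_coe_iff (hO : Orthodox S) {x y : S} :
    (x : hO.sameInversesCon.Quotient) = y ↔ VSet x = VSet y :=
  Con.eq _

end Orthodox

section MutuallyInverse

variable {S : Type*} [Semigroup S] {a b : S}

theorem mem_VSet_mul_mul (h1 : a * b * a = a) (h2 : b * a * b = b)
    (h3 : a * b = a * a * (b * b)) : b ∈ VSet (a * (a * b)) := by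
  constructor
  · calc a * (a * b) * b * (a * (a * b)) = a * a * (b * b) * (a * (a * b)) := by
          simp only [mul_assoc]
      _ = a * b * a * (a * b) := by rw [← h3]; simp only [mul_assoc]
      _ = a * (a * b) := by rw [h1]
  · calc b * (a * (a * b)) * b = b * (a * a * (b * b)) := by simp only [mul_assoc]
      _ = b := by rw [← h3, ← mul_assoc, h2]

theorem mem_VSet_mul_mul' (h1 : a * b * a = a) (h2 : b * a * b = b)
    (h3 : a * b = a * a * (b * b)) : a ∈ VSet (a * b * b) := by
  constructor
  · calc a * b * b * a * (a * b * b) = a * b * b * (a * a * (b * b)) := by simp only [mul_assoc]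
      _ = a * b * (b * a * b) := by rw [← h3]; simp only [mul_assoc]
      _ = a * b * b := by rw [h2]
  · calc a * (a * b * b) * a = a * a * (b * b) * a := by simp only [mul_assoc]
      _ = a := by rw [← h3, h1]

theorem VSet_mul_ne (h1 : a * b * a = a) (h2 : b * a * b = b) (h4 : b * a ≠ b * b * (a * a)) :
    VSet (b * a) ≠ VSet (b * b * (a * a)) := by
  intro h
  have hba : IsIdempotentElem (b * a) := isIdempotentElem_mul_of_mem_VSet ⟨h1, h2⟩
  have hmem : b * a ∈ VSet (b * b * (a * a)) := h ▸ IsIdempotentElem.mem_VSet_self hba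
  apply h4
  calc b * a = b * a * (b * b * (a * a)) * (b * a) := hmem.2.symm
    _ = b * a * b * (b * (a * (a * b * a))) := by simp only [mul_assoc]
    _ = b * b * (a * a) := by rw [h1, h2]; simp only [mul_assoc]

variable (hO : Orthodox S)

theorem isIdentity_coe_mul (hgen : Subsemigroup.closure ({a, b} : Set S) = ⊤)
    (h1 : a * b * a = a) (h2 : b * a * b = b) (h3 : a * b = a * a * (b * b))
    (x : hO.sameInversesCon.Quotient) : ↑(a * b) * x = x ∧ x * ↑(a * b) = x := by
  induction x using Con.induction_on with | H x => ?_
  induction x using Subsemigroup.dense_induction {a, b} with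
  | closure => exact hgen
  | mem x hx =>
    simp only [← Con.coe_mul, hO.coe_eq_coe_iff]
    rcases hx with rfl | rfl
    · exact ⟨by rw [h1], hO.2.VSet_eq_of_mem_VSet (mem_VSet_mul_mul h1 h2 h3) ⟨h1, h2⟩⟩
    · exact ⟨hO.2.VSet_eq_of_mem_VSet (mem_VSet_mul_mul' h1 h2 h3) ⟨h2, h1⟩,
        by rw [← mul_assoc, h2]⟩
  | mul x y hx hy =>
    rw [Con.coe_mul x y, ← mul_assoc, hx.1, mul_assoc, hy.2]
    exact ⟨rfl, rfl⟩

theorem exists_mulEquiv_bicyclic (hgen : Subsemigroup.closure ({a, b} : Set S) = ⊤)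
    (h1 : a * b * a = a) (h2 : b * a * b = b) (h3 : a * b = a * a * (b * b))
    (h4 : b * a ≠ b * b * (a * a)) :
    ∃ e : Bicyclic ≃* hO.sameInversesCon.Quotient, e 1 = ↑(a * b) := by
  have hone := isIdentity_coe_mul hO hgen h1 h2 h3
  let _ : Monoid hO.sameInversesCon.Quotient :=
    { one := ↑(a * b), one_mul := fun x => (hone x).1, mul_one := fun x => (hone x).2 }
  have hpq : (a : hO.sameInversesCon.Quotient) * b = 1 := (Con.coe_mul _ _).symm
  have hqp : (b : hO.sameInversesCon.Quotient) * a ≠ 1 := by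
    intro hqp
    refine VSet_mul_ne h1 h2 h4 (hO.coe_eq_coe_iff.1 ?_)
    calc (↑(b * a) : hO.sameInversesCon.Quotient) = b * (b * a) * a := by
          rw [hqp, mul_one, Con.coe_mul]
      _ = ↑(b * b * (a * a)) := by simp only [Con.coe_mul, mul_assoc]
  have hsurj : Function.Surjective (Bicyclic.lift _ _ hpq) := by
    intro x
    induction x using Con.induction_on with | H x => ?_
    induction x using Subsemigroup.dense_induction {a, b} with
    | closure => exact hgen
    | mem x hx =>
      rcases hx with rfl | rfl
      · exact ⟨⟨0, 1⟩, by simp [Bicyclic.lift_apply]⟩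
      · exact ⟨⟨1, 0⟩, by simp [Bicyclic.lift_apply]⟩
    | mul x y hx hy =>
      obtain ⟨u, hu⟩ := hx
      obtain ⟨v, hv⟩ := hy
      exact ⟨u * v, by rw [map_mul, hu, hv, Con.coe_mul]⟩
  exact ⟨.ofBijective _ ⟨Bicyclic.lift_injective hpq hqp, hsurj⟩, map_one _⟩

end MutuallyInverse

theorem stmt14 {S : Type*} [Semigroup S] (hO : Orthodox S) (a b : S)
    (hgen : Subsemigroup.closure ({a, b} : Set S) = ⊤)
    (h1 : a * b * a = a) (h2 : b * a * b = b)
    (h3 : a * b = a * a * (b * b)) (h4 : b * a ≠ b * b * (a * a)) :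
    ∃ φ : S → Bicyclic, Function.Surjective φ ∧
      (∀ x y : S, φ (x * y) = φ x * φ y) ∧
      (∀ x y : S, φ x = φ y ↔ VSet x = VSet y) ∧
      φ (a * b) = 1 := by
  obtain ⟨e, he⟩ := exists_mulEquiv_bicyclic hO hgen h1 h2 h3 h4
  refine ⟨fun x => e.symm x, ?_, fun x y => ?_, fun x y => ?_, e.symm_apply_eq.2 he.symm⟩
  · exact e.symm.surjective.comp fun q => Con.induction_on q fun x => ⟨x, rfl⟩
  · dsimp only
    rw [Con.coe_mul, map_mul]
  · exact e.symm.injective.eq_iff.trans hO.coe_eq_coe_iff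

end PaperStmt
end

section
/- Let S = ⟨a,b⟩ be an orthodox semigroup generated by mutually inverse elements a, b with a a nongroup element and ab = a²b². Then no relation of the form aⁱbᵐ = aⁿbʲ with i, j ∈ {0,1}, m > i, n ≥ 1, j ≤ 1, n ≥ j can hold in S; i.e., a type I abridged word never equals a type II abridged word. -/
namespace PaperStmt

/-- `sp a k` is `a^(k+1)` in a semigroup. -/
private def sp {S : Type*} [Semigroup S] (a : S) : ℕ → S
  | 0 => a
  | k+1 => sp a k * a

private lemma sp_coe {S : Type*} [Semigroup S] (a : S) :
    ∀ k, ((sp a k : S) : WithOne S) = (a : WithOne S) ^ (k + 1)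
  | 0 => (pow_one _).symm
  | k+1 => by rw [sp, WithOne.coe_mul, sp_coe a k, ← pow_succ]

/-- A periodic element lies in a subgroup. -/
private lemma periodic_insub {S : Type*} [Semigroup S] (a : S) (u : ℕ)
    (H : (a : WithOne S) ^ (u + 2) = (a : WithOne S)) : InSubgroup a := by
  set A : WithOne S := (a : WithOne S) with hA
  have hred : ∀ s : ℕ, A ^ (u + 2 + s) = A ^ (s + 1) := by
    intro s
    rw [pow_add, H, ← pow_succ']
  set g : S := sp a u with hg
  set a' : S := sp a (2 * u) with ha'
  have cg : (g : WithOne S) = A ^ (u + 1) := sp_coe a u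
  have ca' : (a' : WithOne S) = A ^ (2 * u + 1) := sp_coe a (2 * u)
  have inj : ∀ x y : S, (x : WithOne S) = (y : WithOne S) → x = y := fun x y h =>
    WithOne.coe_inj.mp h
  have egg : g * g = g := by
    apply inj
    rw [WithOne.coe_mul, cg]
    have e1 : (u + 1) + (u + 1) = u + 2 + u := by omega
    rw [← pow_add, e1, hred u]
  have ega : g * a = a := by
    apply inj
    rw [WithOne.coe_mul, cg, ← hA, ← pow_succ]
    exact H
  have eag : a * g = a := by
    apply inj
    rw [WithOne.coe_mul, cg, ← hA, ← pow_succ']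
    exact H
  have eaa' : a * a' = g := by
    apply inj
    rw [WithOne.coe_mul, cg, ca', ← hA, ← pow_succ']
    have e1 : (2 * u + 1) + 1 = u + 2 + u := by omega
    rw [e1, hred u]
  have ea'a : a' * a = g := by
    apply inj
    rw [WithOne.coe_mul, cg, ca', ← hA, ← pow_succ]
    have e1 : (2 * u + 1) + 1 = u + 2 + u := by omega
    rw [e1, hred u]
  have ega' : g * a' = a' := by
    apply inj
    rw [WithOne.coe_mul, cg, ca', ← pow_add]
    have e1 : (u + 1) + (2 * u + 1) = u + 2 + (2 * u) := by omega
    rw [e1, hred (2 * u)]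
  have ea'g : a' * g = a' := by
    apply inj
    rw [WithOne.coe_mul, cg, ca', ← pow_add]
    have e1 : (2 * u + 1) + (u + 1) = u + 2 + (2 * u) := by omega
    rw [e1, hred (2 * u)]
  refine ⟨{x | g * x = x ∧ x * g = x ∧ ∃ y, g * y = y ∧ y * g = y ∧ x * y = g ∧ y * x = g},
    ⟨ega, eag, a', ega', ea'g, eaa', ea'a⟩, ?_, g,
    ⟨egg, egg, g, egg, egg, egg, egg⟩, ?_, ?_⟩
  · rintro x ⟨hgx, hxg, x', hgx', hx'g, hxx', hx'x⟩ y ⟨hgy, hyg, y', hgy', hy'g, hyy', hy'y⟩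
    refine ⟨by rw [← mul_assoc, hgx], by rw [mul_assoc, hyg], y' * x', by rw [← mul_assoc, hgy'],
      by rw [mul_assoc, hx'g], ?_, ?_⟩
    · calc x * y * (y' * x') = x * (y * y') * x' := by simp only [mul_assoc]
        _ = x * g * x' := by rw [hyy']
        _ = g := by rw [hxg, hxx']
    · calc y' * x' * (x * y) = y' * (x' * x) * y := by simp only [mul_assoc]
        _ = y' * g * y := by rw [hx'x]
        _ = g := by rw [hy'g, hy'y]
  · rintro x ⟨hgx, hxg, _⟩
    exact ⟨hgx, hxg⟩
  · rintro x ⟨hgx, hxg, y, hgy, hyg, hxy, hyx⟩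
    exact ⟨y, ⟨hgy, hyg, x, hgx, hxg, hyx, hxy⟩, hxy, hyx⟩

theorem stmt15 {S : Type*} [Semigroup S] (hO : Orthodox S) (a b : S)
    (hgen : Subsemigroup.closure ({a, b} : Set S) = ⊤)
    (h1 : a * b * a = a) (h2 : b * a * b = b)
    (h3 : a * b = a * a * (b * b)) (hng : ¬ InSubgroup a) :
    ∀ i j m n : ℕ, i ≤ 1 → j ≤ 1 → i < m → 1 ≤ n → j ≤ n →
      (a : WithOne S) ^ i * (b : WithOne S) ^ m ≠
        (a : WithOne S) ^ n * (b : WithOne S) ^ j := by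
  intro i j m n hi hj him hn hjn heq
  set A : WithOne S := (a : WithOne S) with hA
  set B : WithOne S := (b : WithOne S) with hB
  have hh1 : A * B * A = A := by
    simp only [hA, hB, ← WithOne.coe_mul]
    exact_mod_cast h1
  have hh3 : A * B = A * A * (B * B) := by
    simp only [hA, hB, ← WithOne.coe_mul]
    exact_mod_cast h3
  -- `a^(k+1) b^(k+1) = a b` for all `k`
  have powab : ∀ k : ℕ, A ^ (k + 1) * B ^ (k + 1) = A * B := by
    intro k
    induction k with
    | zero => rw [pow_one, pow_one]
    | succ k ih =>
        calc A ^ (k + 2) * B ^ (k + 2) = A * A ^ (k + 1) * (B ^ (k + 1) * B) := by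
              rw [← pow_succ', ← pow_succ]
          _ = A * (A ^ (k + 1) * B ^ (k + 1)) * B := by simp only [mul_assoc]
          _ = A * (A * B) * B := by rw [ih]
          _ = A * A * (B * B) := by simp only [mul_assoc]
          _ = A * B := hh3.symm
  -- multiply `heq` on the left by `A^(m-i)`
  have key : A * B = A ^ (m - i + n) * B ^ j := by
    have e1 : A ^ (m - i) * (A ^ i * B ^ m) = A ^ (m - i) * (A ^ n * B ^ j) := by rw [heq]
    have e2 : m - i + i = m := by omega
    have e3 : ∃ k, m = k + 1 := ⟨m - 1, by omega⟩
    obtain ⟨k, hk⟩ := e3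
    calc A * B = A ^ (k + 1) * B ^ (k + 1) := (powab k).symm
      _ = A ^ m * B ^ m := by rw [hk]
      _ = A ^ (m - i) * A ^ i * B ^ m := by rw [← pow_add, e2]
      _ = A ^ (m - i) * (A ^ i * B ^ m) := by rw [mul_assoc]
      _ = A ^ (m - i) * (A ^ n * B ^ j) := e1
      _ = A ^ (m - i + n) * B ^ j := by rw [← mul_assoc, ← pow_add]
  set N : ℕ := m - i + n with hN
  have hN2 : 2 ≤ N := by omega
  apply hng
  have hper : ∃ u : ℕ, A ^ (u + 2) = A := by
    interval_cases j
    · -- j = 0 : A*B = A^N, so A = A^(N+1)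
      rw [pow_zero, mul_one] at key
      refine ⟨N - 1, ?_⟩
      have : A ^ (N - 1 + 2) = A * B * A := by
        rw [key, ← pow_succ]
        congr 1
        omega
      rw [this, hh1]
    · -- j = 1 : A*B = A^N * B, so A = A^N
      rw [pow_one] at key
      refine ⟨N - 2, ?_⟩
      have e4 : N - 2 + 2 = N := by omega
      have e5 : ∃ k, N = k + 1 := ⟨N - 1, by omega⟩
      obtain ⟨k, hk⟩ := e5
      calc A ^ (N - 2 + 2) = A ^ N := by rw [e4]
        _ = A ^ k * A := by rw [hk, pow_succ]
        _ = A ^ k * (A * B * A) := by rw [hh1]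
        _ = A ^ k * A * B * A := by simp only [mul_assoc]
        _ = A ^ N * B * A := by rw [← pow_succ, ← hk]
        _ = A * B * A := by rw [← key]
        _ = A := hh1
  obtain ⟨u, H⟩ := hper
  exact periodic_insub a u H

end PaperStmt
end

section
/- Let S = ⟨a,b⟩ be an orthodox semigroup generated by mutually inverse elements a, b with a a nongroup element and ab = a²b². If aⁿbʲ = aⁿ'bʲ' with j, j' ∈ {0,1}, n, n' ≥ 1 and (n,j) ≠ (n',j'), then {n,n'} = {k, k+1} for some k and the relation is equivalent to a^{k+1}b = aᵏ. -/
namespace PaperStmt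

/-- From `a^m b a = a` (for `m ≥ 1`). -/
private lemma pow_absorb {M : Type*} [Monoid M] (X Y : M)
    (h1 : X * Y * X = X) : ∀ m, 1 ≤ m → X ^ m * Y * X = X ^ m := by
  intro m hm
  obtain ⟨u, rfl⟩ : ∃ u, m = u + 1 := ⟨m - 1, by omega⟩
  calc X ^ (u + 1) * Y * X = X ^ u * (X * Y * X) := by
        rw [pow_succ X u, mul_assoc, mul_assoc, ← mul_assoc X Y X]
    _ = X ^ (u + 1) := by rw [h1, ← pow_succ]

/-- `X^m Y^m = XY` for all `m ≥ 1`, given `XY = X²Y²`. -/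
private lemma powE {M : Type*} [Monoid M] (X Y : M)
    (h3 : X * Y = X * X * (Y * Y)) :
    ∀ m, 1 ≤ m → X ^ m * Y ^ m = X * Y := by
  intro m hm
  induction m with
  | zero => omega
  | succ u ih =>
    rcases Nat.eq_zero_or_pos u with hu | hu
    · subst hu; simp
    · have e1 : X ^ (u + 1) * Y ^ (u + 1) = X * (X ^ u * Y ^ u * Y) := by
        rw [pow_succ' X u, pow_succ Y u, mul_assoc, ← mul_assoc (X ^ u)]
      rw [e1, ih hu, mul_assoc X Y Y, ← mul_assoc X X, ← h3]

/-- If `X^m = X^(m+d)` then `X^(d+1) = X`. -/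
private lemma pow_cycle {M : Type*} [Monoid M] (X Y : M)
    (h1 : X * Y * X = X) (h3 : X * Y = X * X * (Y * Y))
    (m d : ℕ) (hm : 1 ≤ m)
    (heq : X ^ m = X ^ (m + d)) : X ^ (d + 1) = X := by
  have hE : X ^ m * Y ^ m = X * Y := powE X Y h3 m hm
  have hdE : X ^ d * (X * Y) = X * Y := by
    have hsplit : X ^ (m + d) = X ^ d * X ^ m := by rw [← pow_add]; congr 1; omega
    rw [← hE, ← mul_assoc, ← hsplit, ← heq]
  calc X ^ (d + 1) = X ^ d * X := pow_succ X d
    _ = X ^ d * (X * Y * X) := by rw [h1]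
    _ = X ^ d * (X * Y) * X := (mul_assoc _ _ _).symm
    _ = X * Y * X := by rw [hdE]
    _ = X := h1

private lemma coe_pow_exists {S : Type*} [Semigroup S] (a : S) :
    ∀ i, 1 ≤ i → ∃ s : S, (s : WithOne S) = (a : WithOne S) ^ i := by
  intro i hi
  induction i with
  | zero => omega
  | succ u ih =>
    rcases Nat.eq_zero_or_pos u with hu | hu
    · subst hu; exact ⟨a, (pow_one _).symm⟩
    · obtain ⟨s, hs⟩ := ih hu
      exact ⟨s * a, by rw [WithOne.coe_mul, hs, ← pow_succ]⟩

/-- If `a^(d+1) = a` (in `S¹`) with `d ≥ 1`, then `a` lies in a subgroup. -/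
private lemma insub_of_pow {S : Type*} [Semigroup S] (a : S) (d : ℕ) (hd : 1 ≤ d)
    (hrec : (a : WithOne S) ^ (d + 1) = (a : WithOne S)) : InSubgroup a := by
  have per : ∀ j, 1 ≤ j → (a : WithOne S) ^ (j + d) = (a : WithOne S) ^ j := by
    intro j hj
    obtain ⟨u, rfl⟩ : ∃ u, j = u + 1 := ⟨j - 1, by omega⟩
    have hh : (a : WithOne S) ^ (u + 1 + d)
        = (a : WithOne S) ^ (d + 1) * (a : WithOne S) ^ u := by
      rw [← pow_add]; congr 1; omega
    rw [hh, hrec, ← pow_succ']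
  have perm : ∀ j t, 1 ≤ j → (a : WithOne S) ^ (j + d * t) = (a : WithOne S) ^ j := by
    intro j t hj
    induction t with
    | zero => simp
    | succ u ih =>
      have h2 : j + d * (u + 1) = j + d * u + d := by ring
      rw [h2, per _ (le_trans hj (Nat.le_add_right _ _)), ih]
  obtain ⟨e, he⟩ := coe_pow_exists a d hd
  refine ⟨{x : S | ∃ i, 1 ≤ i ∧ (x : WithOne S) = (a : WithOne S) ^ i},
    ⟨1, le_refl 1, (pow_one _).symm⟩, ?_, e, ⟨d, hd, he⟩, ?_, ?_⟩
  · rintro x ⟨i, hi, hx⟩ y ⟨i', hi', hy⟩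
    exact ⟨i + i', by omega, by rw [WithOne.coe_mul, hx, hy, pow_add]⟩
  · rintro x ⟨i, hi, hx⟩
    constructor
    · apply WithOne.coe_inj.mp
      rw [WithOne.coe_mul, he, hx, ← pow_add]
      have h3 : d + i = i + d := Nat.add_comm d i
      rw [h3, per i hi]
    · apply WithOne.coe_inj.mp
      rw [WithOne.coe_mul, hx, he, ← pow_add, per i hi]
  · rintro x ⟨i, hi, hx⟩
    have hle : i + 1 ≤ d * (i + 1) := Nat.le_mul_of_pos_left _ (by omega)
    have hle' : i ≤ d * (i + 1) := (Nat.le_succ i).trans hle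
    have hm1 : 1 ≤ d * (i + 1) - i := by
      refine Nat.le_sub_of_add_le ?_
      rw [Nat.add_comm]; exact hle
    obtain ⟨y, hy⟩ := coe_pow_exists a (d * (i + 1) - i) hm1
    have h4 : i + (d * (i + 1) - i) = d + d * i := by
      rw [Nat.add_sub_cancel' hle']; ring
    have h5 : (d * (i + 1) - i) + i = d + d * i := by
      rw [Nat.sub_add_cancel hle']; ring
    refine ⟨y, ⟨d * (i + 1) - i, hm1, hy⟩, ?_, ?_⟩
    · apply WithOne.coe_inj.mp
      rw [WithOne.coe_mul, hx, hy, ← pow_add, he, h4, perm d i hd]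
    · apply WithOne.coe_inj.mp
      rw [WithOne.coe_mul, hy, hx, ← pow_add, he, h5, perm d i hd]

/-- A nongroup element admits no repetition among its positive powers. -/
private lemma collapse_false {S : Type*} [Semigroup S] (a b : S)
    (h1 : a * b * a = a) (h3 : a * b = a * a * (b * b)) (hng : ¬ InSubgroup a)
    (m m' : ℕ) (hm : 1 ≤ m) (hm' : 1 ≤ m') (hne : m ≠ m')
    (heq : (a : WithOne S) ^ m = (a : WithOne S) ^ m') : False := by
  have H1 : (a : WithOne S) * b * a = a := by exact_mod_cast h1
  have H3 : (a : WithOne S) * b = a * a * ((b : WithOne S) * b) := by exact_mod_cast h3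
  rcases Nat.lt_or_ge m m' with h | h
  · exact hng (insub_of_pow a (m' - m) (by omega)
      (pow_cycle (a : WithOne S) b H1 H3 m (m' - m) hm
        (by rw [heq]; congr 1; omega)))
  · have h' : m' < m := by omega
    exact hng (insub_of_pow a (m - m') (by omega)
      (pow_cycle (a : WithOne S) b H1 H3 m' (m - m') hm'
        (by rw [← heq]; congr 1; omega)))

theorem stmt16 {S : Type*} [Semigroup S] (hO : Orthodox S) (a b : S)
    (hgen : Subsemigroup.closure ({a, b} : Set S) = ⊤)
    (h1 : a * b * a = a) (h2 : b * a * b = b)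
    (h3 : a * b = a * a * (b * b)) (hng : ¬ InSubgroup a) :
    ∀ n n' j j' : ℕ, 1 ≤ n → 1 ≤ n' → j ≤ 1 → j' ≤ 1 → (n, j) ≠ (n', j') →
      (a : WithOne S) ^ n * (b : WithOne S) ^ j =
        (a : WithOne S) ^ n' * (b : WithOne S) ^ j' →
      ∃ k : ℕ, 1 ≤ k ∧ ((n = k ∧ n' = k + 1) ∨ (n = k + 1 ∧ n' = k)) ∧
        (a : WithOne S) ^ (k + 1) * (b : WithOne S) = (a : WithOne S) ^ k := by
  intro n n' j j' hn hn' hj hj' hne heq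
  have H1 : (a : WithOne S) * b * a = a := by exact_mod_cast h1
  have YX : ∀ m : ℕ, 1 ≤ m → (a : WithOne S) ^ m * b * a = (a : WithOne S) ^ m :=
    fun m hm => pow_absorb (a : WithOne S) (b : WithOne S) H1 m hm
  interval_cases j <;> interval_cases j' <;>
    simp only [pow_zero, pow_one, mul_one] at heq
  · -- j = 0, j' = 0
    have hnn : n ≠ n' := fun h => hne (by rw [h])
    exact (collapse_false a b h1 h3 hng n n' hn hn' hnn heq).elim
  · -- j = 0, j' = 1
    have h' : (a : WithOne S) ^ (n + 1) = (a : WithOne S) ^ n' := by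
      rw [pow_succ, heq]; exact YX n' hn'
    rcases eq_or_ne (n + 1) n' with h | h
    · refine ⟨n, hn, Or.inl ⟨rfl, h.symm⟩, ?_⟩
      subst h
      exact heq.symm
    · exact (collapse_false a b h1 h3 hng (n + 1) n' (by omega) hn' h h').elim
  · -- j = 1, j' = 0
    have h' : (a : WithOne S) ^ n = (a : WithOne S) ^ (n' + 1) := by
      rw [pow_succ, ← heq]; exact (YX n hn).symm
    rcases eq_or_ne n (n' + 1) with h | h
    · refine ⟨n', hn', Or.inr ⟨h, rfl⟩, ?_⟩
      rw [← h]; exact heq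
    · exact (collapse_false a b h1 h3 hng n (n' + 1) hn (by omega) h h').elim
  · -- j = 1, j' = 1
    have h' : (a : WithOne S) ^ n = (a : WithOne S) ^ n' := by
      rw [← YX n hn, ← YX n' hn', heq]
    have hnn : n ≠ n' := fun h => hne (by rw [h])
    exact (collapse_false a b h1 h3 hng n n' hn hn' hnn h').elim

end PaperStmt
end
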